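/- arXiv:1802.10124 — 9 statements merged into one kernel-verified Lean document; each statement's English description precedes it below -/
import Mathlib

section
/- Let x_1, ..., x_k be positive real-valued random variables (not necessarily independent). Then E[∏_{i=1}^k x_i^{-1}] ≥ ∏_{i=1}^k (E[x_i])^{-1}. -/
/-- For positive random variables `x i` on a finite probability space,
`E[∏ i, (x i)⁻¹] ≥ ∏ i, (E[x i])⁻¹`. -/
theorem expectation_prod_inv_ge {Ω : Type*} [Fintype Ω]
    (p : Ω → ℝ) (hp : ∀ ω, 0 ≤ p ω) (hsum : ∑ ω, p ω = 1)
    (k : ℕ) (x : Fin k → Ω → ℝ) (hx : ∀ i ω, 0 < x i ω) :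
    ∏ i, (∑ ω, p ω * x i ω)⁻¹ ≤ ∑ ω, p ω * ∏ i, (x i ω)⁻¹ := by
  rcases Nat.eq_zero_or_pos k with hk | hk
  · subst hk; simp [hsum]
  haveI : Nonempty (Fin k) := Fin.pos_iff_nonempty.mp hk
  have hk' : (0:ℝ) < k := by exact_mod_cast hk
  set a : Fin k → ℝ := fun i => ∑ ω, p ω * x i ω with ha_def
  have ha : ∀ i, 0 < a i := by
    intro i
    have hex : ∃ ω, 0 < p ω := by
      by_contra h
      push_neg at h
      have : ∑ ω, p ω = 0 := Finset.sum_eq_zero fun ω _ => le_antisymm (h ω) (hp ω)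
      simp [this] at hsum
    obtain ⟨ω₀, hω₀⟩ := hex
    exact Finset.sum_pos' (fun ω _ => mul_nonneg (hp ω) (hx i ω).le)
      ⟨ω₀, Finset.mem_univ _, mul_pos hω₀ (hx i ω₀)⟩
  set Z : Ω → ℝ := fun ω => (∑ i, x i ω / a i) / k with hZ_def
  have hZpos : ∀ ω, 0 < Z ω := fun ω =>
    div_pos (Finset.sum_pos (fun i _ => div_pos (hx i ω) (ha i)) Finset.univ_nonempty) hk'
  -- E[Z] = 1
  have hEZ : ∑ ω, p ω * Z ω = 1 := by
    calc ∑ ω, p ω * Z ω = ∑ ω, ∑ i, p ω * x i ω / a i / k := by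
          refine Finset.sum_congr rfl fun ω _ => ?_
          show p ω * ((∑ i, x i ω / a i) / (k:ℝ)) = _
          rw [← mul_div_assoc, Finset.mul_sum, Finset.sum_div]
          exact Finset.sum_congr rfl fun i _ => by ring
      _ = ∑ i : Fin k, ∑ ω, p ω * x i ω / a i / k := Finset.sum_comm
      _ = ∑ i : Fin k, a i / a i / k := by
          refine Finset.sum_congr rfl fun i _ => ?_
          rw [← Finset.sum_div, ← Finset.sum_div]
      _ = 1 := by
          simp only [div_self (ha _).ne', Finset.sum_const, Finset.card_univ,
            Fintype.card_fin, nsmul_eq_mul]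
          rw [mul_one_div, div_self hk'.ne']
  -- AM-GM: ∏ (x i ω / a i) ≤ Z ω ^ k
  have hamgm : ∀ ω, ∏ i, (x i ω / a i) ≤ Z ω ^ k := by
    intro ω
    have h1 : ∏ i, (x i ω / a i) ^ ((1:ℝ)/k) ≤ ∑ i, (1/k) * (x i ω / a i) :=
      Real.geom_mean_le_arith_mean_weighted Finset.univ (fun _ => 1/k) (fun i => x i ω / a i)
        (fun i _ => by positivity)
        (by simp; field_simp)
        (fun i _ => (div_pos (hx i ω) (ha i)).le)
    have h2 : ∑ i, (1/k) * (x i ω / a i) = Z ω := by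
      show _ = (∑ i, x i ω / a i) / (k:ℝ)
      rw [Finset.sum_div]
      exact Finset.sum_congr rfl fun i _ => by ring
    have h3 : (∏ i, (x i ω / a i) ^ ((1:ℝ)/k)) ^ (k:ℕ) = ∏ i, (x i ω / a i) := by
      rw [← Finset.prod_pow]
      refine Finset.prod_congr rfl fun i _ => ?_
      rw [← Real.rpow_natCast ((x i ω / a i) ^ ((1:ℝ)/k)) k,
        ← Real.rpow_mul (div_pos (hx i ω) (ha i)).le]
      rw [one_div, inv_mul_cancel₀ hk'.ne', Real.rpow_one]
    calc ∏ i, (x i ω / a i) = (∏ i, (x i ω / a i) ^ ((1:ℝ)/k)) ^ (k:ℕ) := h3.symm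
      _ ≤ (Z ω) ^ (k:ℕ) := by
          apply pow_le_pow_left₀ (Finset.prod_nonneg fun i _ =>
            Real.rpow_nonneg (div_pos (hx i ω) (ha i)).le _)
          rw [← h2]; exact h1
  -- Jensen: 1 ≤ ∑ p ω * (Z ω)^(-k)
  have hjensen : (1:ℝ) ≤ ∑ ω, p ω * (Z ω) ^ (-(k:ℤ)) := by
    have hconv := convexOn_zpow (𝕜 := ℝ) (-(k:ℤ))
    have := hconv.map_sum_le (t := Finset.univ) (w := p) (p := Z)
      (fun ω _ => hp ω) hsum (fun ω _ => hZpos ω)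
    simp only [smul_eq_mul] at this
    rw [hEZ] at this
    simpa using this
  -- combine
  have key : ∀ ω, (∏ i, a i)⁻¹ * (Z ω) ^ (-(k:ℤ)) ≤ ∏ i, (x i ω)⁻¹ := by
    intro ω
    have hprodx : (0:ℝ) < ∏ i, (x i ω / a i) :=
      Finset.prod_pos fun i _ => div_pos (hx i ω) (ha i)
    have h1 : (Z ω) ^ (-(k:ℤ)) = ((Z ω) ^ (k:ℕ))⁻¹ := by
      rw [zpow_neg, zpow_natCast]
    have h2 : ((Z ω) ^ (k:ℕ))⁻¹ ≤ (∏ i, (x i ω / a i))⁻¹ :=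
      inv_anti₀ hprodx (hamgm ω)
    have h3 : (∏ i, a i)⁻¹ * (∏ i, (x i ω / a i))⁻¹ = ∏ i, (x i ω)⁻¹ := by
      rw [← Finset.prod_inv_distrib, ← Finset.prod_inv_distrib, ← Finset.prod_mul_distrib]
      exact Finset.prod_congr rfl fun i _ => by
        rw [inv_div, ← mul_div_assoc, inv_mul_cancel₀ (ha i).ne', one_div]
    calc (∏ i, a i)⁻¹ * (Z ω) ^ (-(k:ℤ))
        ≤ (∏ i, a i)⁻¹ * (∏ i, (x i ω / a i))⁻¹ := by
          rw [h1]
          exact mul_le_mul_of_nonneg_left h2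
            (inv_nonneg.mpr (Finset.prod_nonneg fun i _ => (ha i).le))
      _ = ∏ i, (x i ω)⁻¹ := h3
  calc ∏ i, (a i)⁻¹ = (∏ i, a i)⁻¹ * 1 := by
        rw [Finset.prod_inv_distrib, mul_one]
    _ ≤ (∏ i, a i)⁻¹ * ∑ ω, p ω * (Z ω) ^ (-(k:ℤ)) :=
        mul_le_mul_of_nonneg_left hjensen
          (inv_nonneg.mpr (Finset.prod_nonneg fun i _ => (ha i).le))
    _ = ∑ ω, p ω * ((∏ i, a i)⁻¹ * (Z ω) ^ (-(k:ℤ))) := by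
        rw [Finset.mul_sum]
        exact Finset.sum_congr rfl fun ω _ => by ring
    _ ≤ ∑ ω, p ω * ∏ i, (x i ω)⁻¹ :=
        Finset.sum_le_sum fun ω _ => mul_le_mul_of_nonneg_left (key ω) (hp ω)
end

section
/- For 0 < L < N with L even, the expectation ⟨0|(X/N)^L|0⟩ of the L-th power of the normalized transverse field operator in a computational basis state is at most (L-1)!!/N^L ≤ (L/N)^{L/2}, where (L-1)!! = (L-1)(L-3)···1. -/
/-- Number of length-`L` walks on the hypercube `{0,1}^N` (recorded by the sequence
of flipped coordinates) that return to the starting point: each coordinate must be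
flipped an even number of times. -/
def returnCount (N L : ℕ) : ℕ :=
  ((Finset.univ : Finset (Fin L → Fin N)).filter
    (fun f => ∀ j, Even ((Finset.univ.filter (fun a => f a = j)).card))).card

/-- Return probability after `L` steps of the simple random walk on `{0,1}^N`,
which equals `⟨0|(X/N)^L|0⟩` for a computational basis state. -/
noncomputable def returnProb (N L : ℕ) : ℝ := (returnCount N L : ℝ) / (N : ℝ) ^ L

open Finset

def emb (L : ℕ) (j : Fin (L+2)) (a : Fin L) : Fin (L+2) :=
  if (a:ℕ)+1 < (j:ℕ) then ⟨(a:ℕ)+1, by have := a.isLt; omega⟩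
  else ⟨(a:ℕ)+2, by have := a.isLt; omega⟩

lemma emb_ne_zero (L : ℕ) (j : Fin (L+2)) (a : Fin L) : emb L j a ≠ 0 := by
  unfold emb; split <;> (intro h; have := Fin.val_eq_of_eq h; simp at this)

lemma emb_ne (L : ℕ) (j : Fin (L+2)) (a : Fin L) : emb L j a ≠ j := by
  unfold emb; split <;> (rename_i h; intro hh; have := Fin.val_eq_of_eq hh; simp at this; omega)

lemma emb_inj (L : ℕ) (j : Fin (L+2)) : Function.Injective (emb L j) := by
  intro a b h
  unfold emb at h
  have := Fin.val_eq_of_eq h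
  apply Fin.ext
  split at this <;> split at this <;> simp at this <;> omega

lemma emb_surj (L : ℕ) (j : Fin (L+2)) (hj : j ≠ 0) (b : Fin (L+2)) (hb0 : b ≠ 0)
    (hbj : b ≠ j) : ∃ a : Fin L, emb L j a = b := by
  have hj0 : 0 < (j:ℕ) := by
    rcases Nat.eq_zero_or_pos (j:ℕ) with h | h
    · exact absurd (Fin.ext h) hj
    · exact h
  have hb0' : 0 < (b:ℕ) := by
    rcases Nat.eq_zero_or_pos (b:ℕ) with h | h
    · exact absurd (Fin.ext h) hb0
    · exact h
  have hbj' : (b:ℕ) ≠ (j:ℕ) := fun h => hbj (Fin.ext h)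
  have hbL := b.isLt
  rcases lt_or_gt_of_ne hbj' with h | h
  · refine ⟨⟨(b:ℕ)-1, by have := j.isLt; omega⟩, ?_⟩
    unfold emb
    rw [if_pos (by simp; omega)]
    apply Fin.ext; simp; omega
  · refine ⟨⟨(b:ℕ)-2, by omega⟩, ?_⟩
    unfold emb
    rw [if_neg (by simp; omega)]
    apply Fin.ext; simp; omega

lemma fiber_card (N L : ℕ) (j : Fin (L+2)) (hj : j ≠ 0) (f : Fin (L+2) → Fin N) (w : Fin N) :
    (univ.filter (fun a : Fin L => f (emb L j a) = w)).card
      = (univ.filter (fun b : Fin (L+2) => ¬(b = 0 ∨ b = j) ∧ f b = w)).card := by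
  apply Finset.card_bij (fun a _ => emb L j a)
  · intro a ha
    simp only [mem_filter, mem_univ, true_and] at ha ⊢
    exact ⟨by push_neg; exact ⟨emb_ne_zero L j a, emb_ne L j a⟩, ha⟩
  · intro a _ b _ h
    exact emb_inj L j h
  · intro b hb
    simp only [mem_filter, mem_univ, true_and] at hb
    obtain ⟨⟨hb0, hbj⟩, hfb⟩ := by push_neg at hb; exact hb
    obtain ⟨a, ha⟩ := emb_surj L j hj b hb0 hbj
    exact ⟨a, by simp [ha, hfb]⟩

lemma fiber_split (N L : ℕ) (j : Fin (L+2)) (hj : j ≠ 0) (f : Fin (L+2) → Fin N)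
    (hfj : f j = f 0) (w : Fin N) :
    (univ.filter (fun b : Fin (L+2) => f b = w)).card
      = (univ.filter (fun b : Fin (L+2) => ¬(b = 0 ∨ b = j) ∧ f b = w)).card
        + (if w = f 0 then 2 else 0) := by
  have hsplit := Finset.card_filter_add_card_filter_not
    (s := (univ : Finset (Fin (L+2))).filter (fun b => f b = w))
    (p := fun b => b = 0 ∨ b = j)
  rw [Finset.filter_filter, Finset.filter_filter] at hsplit
  have h1 : (univ.filter (fun b : Fin (L+2) => f b = w ∧ ¬(b = 0 ∨ b = j))).card
      = (univ.filter (fun b : Fin (L+2) => ¬(b = 0 ∨ b = j) ∧ f b = w)).card := by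
    congr 1; apply Finset.filter_congr; intro b _; tauto
  have h2 : (univ.filter (fun b : Fin (L+2) => f b = w ∧ (b = 0 ∨ b = j)))
      = if w = f 0 then ({0, j} : Finset (Fin (L+2))) else ∅ := by
    split
    · rename_i hw
      ext b
      simp only [mem_filter, mem_univ, true_and, mem_insert, mem_singleton]
      constructor
      · tauto
      · rintro (rfl | rfl)
        · exact ⟨hw.symm, Or.inl rfl⟩
        · exact ⟨hfj.trans hw.symm, Or.inr rfl⟩
    · rename_i hw
      ext b
      simp only [mem_filter, mem_univ, true_and, notMem_empty, iff_false]
      rintro ⟨hfb, (rfl | rfl)⟩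
      · exact hw hfb.symm
      · exact hw (hfj ▸ hfb).symm
  rw [h2] at hsplit
  have h3 : (if w = f 0 then ({0, j} : Finset (Fin (L+2))) else ∅).card
      = (if w = f 0 then 2 else 0) := by
    split
    · rw [Finset.card_insert_of_notMem (by simp [Ne.symm hj]), Finset.card_singleton]
    · simp
  omega

def jf (N L : ℕ) (f : Fin (L+2) → Fin N) : Fin (L+2) :=
  if h : ((univ.filter (fun a : Fin (L+2) => ¬ a = 0 ∧ f a = f 0)).Nonempty)
  then (univ.filter (fun a : Fin (L+2) => ¬ a = 0 ∧ f a = f 0)).min' h else 0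

lemma jf_spec (N L : ℕ) (f : Fin (L+2) → Fin N)
    (hf : ∀ w, Even ((univ.filter (fun a => f a = w)).card)) :
    jf N L f ≠ 0 ∧ f (jf N L f) = f 0 := by
  have h0 : (0 : Fin (L+2)) ∈ univ.filter (fun a => f a = f 0) := by simp
  have hc : 1 ≤ (univ.filter (fun a : Fin (L+2) => f a = f 0)).card :=
    Finset.card_pos.mpr ⟨0, h0⟩
  have hc2 : 1 < (univ.filter (fun a : Fin (L+2) => f a = f 0)).card := by
    rcases hf (f 0) with ⟨r, hr⟩
    omega
  obtain ⟨b, hb, hb0⟩ := Finset.exists_mem_ne hc2 0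
  simp only [mem_filter, mem_univ, true_and] at hb
  have hne : ((univ.filter (fun a : Fin (L+2) => ¬ a = 0 ∧ f a = f 0)).Nonempty) :=
    ⟨b, by simp [hb0, hb]⟩
  have hmem := Finset.min'_mem _ hne
  simp only [mem_filter, mem_univ, true_and] at hmem
  rw [jf, dif_pos hne]
  exact ⟨hmem.1, hmem.2⟩

lemma returnCount_step (N L : ℕ) :
    returnCount N (L+2) ≤ (L+1) * N * returnCount N L := by
  classical
  unfold returnCount
  set S2 := (univ : Finset (Fin (L+2) → Fin N)).filter
    (fun f => ∀ w, Even ((univ.filter (fun a => f a = w)).card)) with hS2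
  set S := (univ : Finset (Fin L → Fin N)).filter
    (fun f => ∀ w, Even ((univ.filter (fun a => f a = w)).card)) with hS
  have key : S2.card ≤ ((univ.erase (0 : Fin (L+2))) ×ˢ (univ : Finset (Fin N)) ×ˢ S).card := by
    apply Finset.card_le_card_of_injOn
      (fun f => (jf N L f, f 0, fun a : Fin L => f (emb L (jf N L f) a)))
    · intro f hf
      rw [Finset.mem_coe, hS2, mem_filter] at hf
      obtain ⟨hj0, hjv⟩ := jf_spec N L f hf.2
      simp only [Finset.mem_coe, Finset.mem_product, Finset.mem_erase, mem_univ, and_true, true_and]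
      refine ⟨hj0, ?_⟩
      rw [hS, mem_filter]
      refine ⟨mem_univ _, fun w => ?_⟩
      rw [fiber_card N L _ hj0]
      have := fiber_split N L _ hj0 f hjv w
      have hev := hf.2 w
      rcases hev with ⟨r, hr⟩
      split at this
      · exact ⟨r - 1, by omega⟩
      · exact ⟨r, by omega⟩
    · intro f1 hf1 f2 hf2 heq
      simp only [Prod.mk.injEq] at heq
      obtain ⟨hj, hv, hg⟩ := heq
      rw [Finset.mem_coe, hS2, mem_filter] at hf1 hf2
      obtain ⟨hj1, hjv1⟩ := jf_spec N L f1 hf1.2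
      obtain ⟨hj2, hjv2⟩ := jf_spec N L f2 hf2.2
      funext b
      rcases eq_or_ne b 0 with rfl | hb0
      · exact hv
      rcases eq_or_ne b (jf N L f1) with rfl | hbj
      · rw [hjv1, hv, hj, hjv2]
      obtain ⟨a, ha⟩ := emb_surj L (jf N L f1) hj1 b hb0 hbj
      have := congrFun hg a
      rw [← hj, ha] at this
      exact this
  calc S2.card ≤ _ := key
    _ = (L+1) * N * S.card := by
        rw [Finset.card_product, Finset.card_product,
          Finset.card_erase_of_mem (mem_univ _), Finset.card_univ, Finset.card_univ,
          Fintype.card_fin, Fintype.card_fin]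
        have h : L + 2 - 1 = L + 1 := by omega
        rw [h]; ring

lemma returnCount_zero (N : ℕ) : returnCount N 0 = 1 := by
  unfold returnCount
  rw [Finset.filter_true_of_mem (fun f _ => fun j => by simp)]
  rw [Finset.card_univ]
  simp

lemma returnCount_bound (N k : ℕ) :
    returnCount N (2*k) ≤ Nat.doubleFactorial (2*k - 1) * N^k := by
  induction k with
  | zero => simp [returnCount_zero]
  | succ k ih =>
      have h2 : 2*(k+1) = 2*k + 2 := by ring
      rw [h2]
      calc returnCount N (2*k+2) ≤ (2*k+1) * N * returnCount N (2*k) := returnCount_step N (2*k)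
        _ ≤ (2*k+1) * N * (Nat.doubleFactorial (2*k-1) * N^k) := by
            exact Nat.mul_le_mul_left _ ih
        _ = ((2*k+1) * Nat.doubleFactorial (2*k-1)) * N^(k+1) := by ring
        _ = Nat.doubleFactorial (2*(k+1) - 1) * N^(k+1) := by
            congr 1
            rcases k with _ | k
            · simp [Nat.doubleFactorial]
            · have h : 2*(k+1+1) - 1 = (2*(k+1) - 1) + 2 := by omega
              rw [h, Nat.doubleFactorial]
              congr 1

lemma doubleFactorial_le (k : ℕ) : Nat.doubleFactorial (2*k - 1) ≤ (2*k)^k := by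
  induction k with
  | zero => simp
  | succ k ih =>
      have h : 2*(k+1) - 1 = (2*k - 1) + 2 ∨ k = 0 := by omega
      rcases h with h | rfl
      · rw [h, Nat.doubleFactorial]
        have h1 : (2*k-1) + 2 = 2*k + 1 := by omega
        calc (2*k - 1 + 2) * Nat.doubleFactorial (2*k-1)
            ≤ (2*(k+1)) * (2*k)^k := by
              apply Nat.mul_le_mul (by omega) ih
          _ ≤ (2*(k+1)) * (2*(k+1))^k := by
              apply Nat.mul_le_mul_left
              exact Nat.pow_le_pow_left (by omega) k
          _ = (2*(k+1))^(k+1) := by ring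
      · simp [Nat.doubleFactorial]


/-- for `0 < L < N` even, `⟨0|(X/N)^L|0⟩ ≤ (L-1)!!/N^{L/2} ≤ (L/N)^{L/2}`. -/
theorem returnProb_le_doubleFactorial (N L : ℕ) (hL : 0 < L) (hLN : L < N) (hLe : Even L) :
    returnProb N L ≤ ((L - 1).doubleFactorial : ℝ) / (N : ℝ) ^ (L / 2) ∧
    ((L - 1).doubleFactorial : ℝ) / (N : ℝ) ^ (L / 2) ≤ ((L : ℝ) / (N : ℝ)) ^ (L / 2) := by
  obtain ⟨k, hk⟩ := hLe
  have hLk : L = 2 * k := by omega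
  have hk2 : L / 2 = k := by omega
  have hN0 : 0 < N := by omega
  have hNR : (0 : ℝ) < (N : ℝ) := by exact_mod_cast hN0
  have hNp : (0 : ℝ) < (N : ℝ) ^ k := pow_pos hNR k
  have hNL : (0 : ℝ) < (N : ℝ) ^ L := pow_pos hNR L
  have hcount : (returnCount N L : ℝ) ≤ ((L - 1).doubleFactorial : ℝ) * (N : ℝ) ^ k := by
    have := returnCount_bound N k
    rw [← hLk] at this
    exact_mod_cast this
  constructor
  · rw [returnProb, hk2, div_le_div_iff₀ hNL hNp]
    have hpow : (N : ℝ) ^ L = (N : ℝ) ^ k * (N : ℝ) ^ k := by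
      rw [← pow_add, ← hk]
    rw [hpow]
    calc (returnCount N L : ℝ) * ((N:ℝ)^k)
        ≤ ((L - 1).doubleFactorial : ℝ) * (N : ℝ) ^ k * ((N:ℝ)^k) :=
          mul_le_mul_of_nonneg_right hcount (le_of_lt hNp)
      _ = ((L - 1).doubleFactorial : ℝ) * ((N:ℝ)^k * (N:ℝ)^k) := by ring
  · rw [hk2, div_pow, div_le_div_iff₀ hNp hNp]
    have hdf : ((L - 1).doubleFactorial : ℝ) ≤ (L : ℝ) ^ k := by
      have := doubleFactorial_le k
      rw [← hLk] at this
      exact_mod_cast this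
    exact mul_le_mul_of_nonneg_right hdf (le_of_lt hNp)
end

section
/- Let h be a real Hermitian tridiagonal matrix indexed by integers, and let ψ be a real eigenvector of h with eigenvalue E. For any ε > 0, the vector ψ_ε defined by ψ_ε(x) = exp(εx)ψ(x) satisfies ⟨ψ_ε|h|ψ_ε⟩/|ψ_ε|² ≤ E + O(ε²)·‖h_od‖, where h_od is the off-diagonal part of h. More precisely, ⟨ψ_ε|h|ψ_ε⟩ - E|ψ_ε|² = -∑_x (e^{εx} - e^{ε(x+1)})² h_{x,x+1} ψ(x)ψ(x+1) ≤ (e^ε - 1)² ‖h_od‖ |ψ_ε|². -/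
/-- The quadratic form `⟨φ|h|φ⟩` of a tridiagonal matrix `h` indexed by `ℤ`. -/
noncomputable def triQF (h : ℤ → ℤ → ℝ) (φ : ℤ → ℝ) : ℝ :=
  ∑' x : ℤ, φ x * (h x (x - 1) * φ (x - 1) + h x x * φ x + h x (x + 1) * φ (x + 1))

/-- if `ψ` is a real eigenvector of a real symmetric tridiagonal matrix `h`
with eigenvalue `E`, and `ψ_ε(x) = exp(εx)ψ(x)`, then
`⟨ψ_ε|h|ψ_ε⟩ - E|ψ_ε|² = -∑_x (e^{εx} - e^{ε(x+1)})² h_{x,x+1} ψ(x)ψ(x+1)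
  ≤ (e^ε - 1)² ‖h_od‖ |ψ_ε|²`,
where `M` is any bound on the off-diagonal entries (e.g. `M = ‖h_od‖`). -/
theorem tridiagonal_exp_tilt (h : ℤ → ℤ → ℝ)
    (hsym : ∀ x y, h x y = h y x)
    (htri : ∀ x y : ℤ, 1 < |x - y| → h x y = 0)
    (ψ : ℤ → ℝ) (hfin : (Function.support ψ).Finite)
    (E : ℝ)
    (heig : ∀ x : ℤ, h x (x - 1) * ψ (x - 1) + h x x * ψ x + h x (x + 1) * ψ (x + 1) = E * ψ x)
    (ε : ℝ) (hε : 0 < ε)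
    (M : ℝ) (hM : ∀ x : ℤ, |h x (x + 1)| ≤ M)
    (ψε : ℤ → ℝ) (hψε : ∀ x : ℤ, ψε x = Real.exp (ε * x) * ψ x) :
    triQF h ψε - E * ∑' x : ℤ, (ψε x) ^ 2
        = -∑' x : ℤ, (Real.exp (ε * x) - Real.exp (ε * (x + 1))) ^ 2 * h x (x + 1) * (ψ x * ψ (x + 1)) ∧
    triQF h ψε - E * ∑' x : ℤ, (ψε x) ^ 2
        ≤ (Real.exp ε - 1) ^ 2 * M * ∑' x : ℤ, (ψε x) ^ 2 := by
  have hM0 : 0 ≤ M := le_trans (abs_nonneg _) (hM 0)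
  -- summability helper
  have hsupp : ∀ f : ℤ → ℝ, (∀ x, ψ x = 0 → f x = 0) → Summable f := by
    intro f hf
    refine summable_of_finite_support (hfin.subset ?_)
    intro x hx
    simp only [Function.mem_support] at hx ⊢
    intro h0
    exact hx (hf x h0)
  set A : ℤ → ℝ := fun x =>
    ψε x * (h x (x - 1) * ψε (x - 1) + h x x * ψε x + h x (x + 1) * ψε (x + 1)) with hA
  set B : ℤ → ℝ := fun x => ψε x ^ 2 with hBdef
  set C : ℤ → ℝ := fun x =>
    (Real.exp (ε * x) - Real.exp (ε * (x + 1))) ^ 2 * h x (x + 1) * (ψ x * ψ (x + 1)) with hCdef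
  set G : ℤ → ℝ := fun x =>
    h x (x + 1) * (ψ x * ψ (x + 1)) *
      (Real.exp (ε * x) * (Real.exp (ε * (x + 1)) - Real.exp (ε * x))) with hGdef
  set G' : ℤ → ℝ := fun x =>
    h x (x - 1) * (ψ x * ψ (x - 1)) *
      (Real.exp (ε * x) * (Real.exp (ε * (x - 1)) - Real.exp (ε * x))) with hG'def
  have hψε0 : ∀ x, ψ x = 0 → ψε x = 0 := fun x hx => by simp [hψε, hx]
  have hsA : Summable A := hsupp A fun x hx => by simp [hA, hψε0 x hx]
  have hsB : Summable B := hsupp B fun x hx => by simp [hBdef, hψε0 x hx]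
  have hsC : Summable C := hsupp C fun x hx => by simp [hCdef, hx]
  have hsG : Summable G := hsupp G fun x hx => by simp [hGdef, hx]
  have hsG' : Summable G' := hsupp G' fun x hx => by simp [hG'def, hx]
  have hsG'1 : Summable (fun x => G' (x + 1)) := hsupp _ fun x hx => by
    simp [hG'def, hx]
  -- key pointwise identity
  have key : ∀ x : ℤ, A x - E * B x = G' x + G x := by
    intro x
    simp only [hA, hBdef, hGdef, hG'def, hψε]
    push_cast
    linear_combination (Real.exp (ε * x)) ^ 2 * ψ x * (heig x)
  -- shift identity
  have hshift : ∑' x : ℤ, G' (x + 1) = ∑' x : ℤ, G' x :=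
    (Equiv.addRight (1 : ℤ)).tsum_eq G'
  have hGC : ∀ x : ℤ, G' (x + 1) + G x = -C x := by
    intro x
    simp only [hG'def, hGdef, hCdef]
    have e1 : (x + 1 - 1 : ℤ) = x := by ring
    rw [e1, hsym (x + 1) x]
    push_cast
    ring
  -- the main equality
  have hEq : triQF h ψε - E * ∑' x : ℤ, (ψε x) ^ 2 = -∑' x : ℤ, C x := by
    have h1 : triQF h ψε - E * ∑' x : ℤ, (ψε x) ^ 2 = ∑' x : ℤ, (A x - E * B x) := by
      rw [triQF, ← tsum_mul_left]
      exact (Summable.tsum_sub hsA (hsB.mul_left E)).symm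
    rw [h1]
    calc ∑' x : ℤ, (A x - E * B x) = ∑' x : ℤ, (G' x + G x) := by
          exact tsum_congr key
      _ = (∑' x : ℤ, G' x) + ∑' x : ℤ, G x := Summable.tsum_add hsG' hsG
      _ = (∑' x : ℤ, G' (x + 1)) + ∑' x : ℤ, G x := by rw [hshift]
      _ = ∑' x : ℤ, (G' (x + 1) + G x) := (Summable.tsum_add hsG'1 hsG).symm
      _ = ∑' x : ℤ, (-C x) := tsum_congr hGC
      _ = -∑' x : ℤ, C x := by rw [tsum_neg]
  refine ⟨hEq, ?_⟩
  rw [hEq]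
  -- pointwise bound
  have hbd : ∀ x : ℤ, -C x ≤ (Real.exp ε - 1) ^ 2 * M / 2 * B x
      + (Real.exp ε - 1) ^ 2 * M / 2 * B (x + 1) := by
    intro x
    have he : Real.exp (ε * (x + 1 : ℤ)) = Real.exp (ε * x) * Real.exp ε := by
      rw [← Real.exp_add]; push_cast; ring_nf
    have h1 : (1 : ℝ) ≤ Real.exp ε := Real.one_le_exp hε.le
    have ha : 0 < Real.exp (ε * x) := Real.exp_pos _
    have step1 : -(h x (x + 1) * (ψ x * ψ (x + 1))) ≤ M * (ψ x ^ 2 + ψ (x + 1) ^ 2) / 2 := by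
      have h2 : |h x (x + 1) * (ψ x * ψ (x + 1))| ≤ M * |ψ x * ψ (x + 1)| := by
        rw [abs_mul]
        exact mul_le_mul_of_nonneg_right (hM x) (abs_nonneg _)
      have h3 : |ψ x * ψ (x + 1)| ≤ (ψ x ^ 2 + ψ (x + 1) ^ 2) / 2 := by
        rw [abs_mul]
        nlinarith [sq_abs (ψ x), sq_abs (ψ (x + 1)), sq_nonneg (|ψ x| - |ψ (x + 1)|),
          abs_nonneg (ψ x), abs_nonneg (ψ (x + 1))]
      nlinarith [neg_abs_le (h x (x + 1) * (ψ x * ψ (x + 1))),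
        mul_le_mul_of_nonneg_left h3 hM0]
    simp only [hCdef, hBdef, hψε]
    push_cast
    rw [show ε * ((x : ℝ) + 1) = ε * x + ε by ring, Real.exp_add]
    set a := Real.exp (ε * x)
    set e := Real.exp ε
    have expand : -((a - a * e) ^ 2 * h x (x + 1) * (ψ x * ψ (x + 1)))
        = (a - a * e) ^ 2 * (-(h x (x + 1) * (ψ x * ψ (x + 1)))) := by ring
    have he2 : (1 : ℝ) ≤ e ^ 2 := by nlinarith
    nlinarith [mul_le_mul_of_nonneg_left step1 (sq_nonneg (a - a * e)),
      mul_nonneg (mul_nonneg (sq_nonneg (e - 1)) hM0) (sq_nonneg (a * ψ (x + 1))),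
      mul_nonneg (mul_nonneg (mul_nonneg (sq_nonneg (e - 1)) hM0) (sq_nonneg (a * ψ (x + 1)))) (sub_nonneg.mpr he2)]
  -- summability of the bounding function
  have hsB1 : Summable (fun x : ℤ => B (x + 1)) :=
    ((Equiv.addRight (1 : ℤ)).summable_iff (f := B)).mpr hsB
  have hshB : ∑' x : ℤ, B (x + 1) = ∑' x : ℤ, B x := (Equiv.addRight (1 : ℤ)).tsum_eq B
  calc -∑' x : ℤ, C x = ∑' x : ℤ, (-C x) := tsum_neg.symm
    _ ≤ ∑' x : ℤ, ((Real.exp ε - 1) ^ 2 * M / 2 * B x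
          + (Real.exp ε - 1) ^ 2 * M / 2 * B (x + 1)) :=
        Summable.tsum_le_tsum hbd hsC.neg ((hsB.mul_left _).add (hsB1.mul_left _))
    _ = (Real.exp ε - 1) ^ 2 * M / 2 * (∑' x : ℤ, B x)
          + (Real.exp ε - 1) ^ 2 * M / 2 * (∑' x : ℤ, B (x + 1)) := by
        rw [Summable.tsum_add (hsB.mul_left _) (hsB1.mul_left _), tsum_mul_left, tsum_mul_left]
    _ = (Real.exp ε - 1) ^ 2 * M * ∑' x : ℤ, (ψε x) ^ 2 := by
        rw [hshB]; simp only [hBdef]; ring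
end

section
/- Let h be a real Hermitian tridiagonal matrix and ψ a real eigenvector with eigenvalue E. For any real function f, ⟨f̂ψ|h|f̂ψ⟩ - E|f̂ψ|² = -∑_x (f(x) - f(x+1))² h_{x,x+1} ψ(x)ψ(x+1), where f̂ is the diagonal matrix with entries f(x). -/
/-- if `ψ` is a real eigenvector of a real symmetric tridiagonal matrix `h`
with eigenvalue `E`, then for any real function `f`,
`⟨f̂ψ|h|f̂ψ⟩ - E‖f̂ψ‖² = -∑_x (f(x) - f(x+1))² h_{x,x+1} ψ(x)ψ(x+1)`. -/
theorem tridiagonal_cutoff_identity (h : ℤ → ℤ → ℝ)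
    (hsym : ∀ x y, h x y = h y x)
    (htri : ∀ x y : ℤ, 1 < |x - y| → h x y = 0)
    (ψ : ℤ → ℝ) (hfin : (Function.support ψ).Finite)
    (E : ℝ)
    (heig : ∀ x : ℤ, h x (x - 1) * ψ (x - 1) + h x x * ψ x + h x (x + 1) * ψ (x + 1) = E * ψ x)
    (f : ℤ → ℝ) :
    triQF h (fun x => f x * ψ x) - E * ∑' x : ℤ, (f x * ψ x) ^ 2
      = -∑' x : ℤ, (f x - f (x + 1)) ^ 2 * h x (x + 1) * (ψ x * ψ (x + 1)) := by
  classical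
  set B : ℤ → ℝ := fun x => (f x * ψ x) ^ 2 with hB
  set D1 : ℤ → ℝ := fun x => f x * ψ x * (h x (x - 1) * ((f (x - 1) - f x) * ψ (x - 1))) with hD1
  set D2 : ℤ → ℝ := fun x => f x * ψ x * (h x (x + 1) * ((f (x + 1) - f x) * ψ (x + 1))) with hD2
  set C : ℤ → ℝ := fun x => (f x - f (x + 1)) ^ 2 * h x (x + 1) * (ψ x * ψ (x + 1)) with hC
  have sum_of : ∀ g : ℤ → ℝ, (∀ x, ψ x = 0 → g x = 0) → Summable g := by
    intro g hg
    apply summable_of_ne_finset_zero (s := hfin.toFinset)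
    intro x hx
    apply hg
    by_contra hne
    exact hx (hfin.mem_toFinset.mpr hne)
  have hBs : Summable B := sum_of B (fun x hx => by simp [hB, hx])
  have hD1s : Summable D1 := sum_of D1 (fun x hx => by simp [hD1, hx])
  have hD2s : Summable D2 := sum_of D2 (fun x hx => by simp [hD2, hx])
  have hCs : Summable C := sum_of C (fun x hx => by simp [hC, hx])
  have hD1s' : Summable (fun x => D1 (x + 1)) :=
    ((Equiv.addRight (1 : ℤ)).summable_iff (f := D1)).mpr hD1s
  have hQF : triQF h (fun x => f x * ψ x)
      = E * ∑' x, B x + (∑' x, D1 x + ∑' x, D2 x) := by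
    rw [triQF, ← Summable.tsum_add hD1s hD2s, ← tsum_mul_left,
      ← Summable.tsum_add (hBs.mul_left E) (hD1s.add hD2s)]
    apply tsum_congr
    intro x
    have hx := heig x
    simp only [hB, hD1, hD2]
    linear_combination (f x) ^ 2 * ψ x * hx
  have hshift : ∑' x, D1 x = ∑' x, D1 (x + 1) :=
    ((Equiv.addRight (1 : ℤ)).tsum_eq D1).symm
  have hfinal : ∑' x, D1 (x + 1) + ∑' x, D2 x = -∑' x, C x := by
    rw [← tsum_neg, ← Summable.tsum_add hD1s' hD2s]
    apply tsum_congr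
    intro x
    have hs := hsym (x + 1) x
    simp only [hD1, hD2, hC, add_sub_cancel_right]
    linear_combination (f (x + 1) * ψ (x + 1) * (f x - f (x + 1)) * ψ x) * hs
  rw [hQF, hshift]
  linarith [hfinal]
end

section
/- Let h be a real Hermitian tridiagonal matrix, ψ a real eigenvector with eigenvalue E. For any integer ℓ > 0 and any index y, there exists a unit vector ξ with ⟨ξ|h|ξ⟩ ≤ E + O(1/ℓ²)·‖h_od‖ such that either ξ(x) is nonvanishing only for x < y + ℓ, or ξ(x) is nonvanishing only for x > y - ℓ. -/
open Function

lemma sum_fin {F : ℤ → ℝ} {s : Set ℤ} (hs : s.Finite) (h0 : ∀ x, x ∉ s → F x = 0) :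
    Summable F :=
  summable_of_ne_finset_zero (s := hs.toFinset) fun b hb => h0 b (by simpa using hb)

def S3 (ψ : ℤ → ℝ) : Set ℤ :=
  support ψ ∪ (fun x => x - 1) '' support ψ ∪ (fun x => x + 1) '' support ψ

lemma S3_fin {ψ : ℤ → ℝ} (hψ : (support ψ).Finite) : (S3 ψ).Finite :=
  ((hψ.union (hψ.image _)).union (hψ.image _))

lemma S3_zero {ψ : ℤ → ℝ} {x : ℤ} (hx : x ∉ S3 ψ) :
    ψ x = 0 ∧ ψ (x + 1) = 0 ∧ ψ (x - 1) = 0 := by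
  simp only [S3, Set.mem_union, Set.mem_image, not_or, not_exists] at hx
  obtain ⟨⟨h1, h2⟩, h3⟩ := hx
  refine ⟨by by_contra hc; exact h1 hc, ?_, ?_⟩
  · by_contra hc; exact (h2 (x + 1)) ⟨hc, by ring⟩
  · by_contra hc; exact (h3 (x - 1)) ⟨hc, by ring⟩

lemma triQF_smul (h : ℤ → ℤ → ℝ) (c : ℝ) (φ : ℤ → ℝ) :
    triQF h (fun x => c * φ x) = c ^ 2 * triQF h φ := by
  unfold triQF
  rw [← tsum_mul_left]
  exact tsum_congr fun x => by ring

lemma triQF_mul_eigen (h : ℤ → ℤ → ℝ) (hsym : ∀ x y, h x y = h y x)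
    {ψ : ℤ → ℝ} (hψ : (support ψ).Finite) (E : ℝ)
    (heig : ∀ x : ℤ, h x (x - 1) * ψ (x - 1) + h x x * ψ x + h x (x + 1) * ψ (x + 1) = E * ψ x)
    (f : ℤ → ℝ) :
    triQF h (fun x => f x * ψ x)
      = E * (∑' x : ℤ, (f x * ψ x) ^ 2)
        - ∑' x : ℤ, h x (x + 1) * ψ x * ψ (x + 1) * (f (x + 1) - f x) ^ 2 := by
  have hS := S3_fin hψ
  set A : ℤ → ℝ := fun x => h x (x - 1) * ψ x * ψ (x - 1) * (f x * (f (x - 1) - f x)) with hA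
  set B : ℤ → ℝ := fun x => h x (x + 1) * ψ x * ψ (x + 1) * (f x * (f (x + 1) - f x)) with hB
  have sA : Summable A := sum_fin hS (fun x hx => by
    obtain ⟨h1, _, _⟩ := S3_zero hx; simp [hA, h1])
  have sB : Summable B := sum_fin hS (fun x hx => by
    obtain ⟨h1, _, _⟩ := S3_zero hx; simp [hB, h1])
  have sA' : Summable (fun x => A (x + 1)) := sum_fin hS (fun x hx => by
    obtain ⟨_, h2, _⟩ := S3_zero hx; simp [hA, h2])
  have sq2 : Summable (fun x : ℤ => (f x * ψ x) ^ 2) := sum_fin hS (fun x hx => by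
    obtain ⟨h1, _, _⟩ := S3_zero hx; simp [h1])
  have sE : Summable (fun x : ℤ => E * (f x * ψ x) ^ 2) := sq2.mul_left E
  have step1 : triQF h (fun x => f x * ψ x)
      = ∑' x : ℤ, (E * (f x * ψ x) ^ 2 + (A x + B x)) := by
    refine tsum_congr fun x => ?_
    simp only [hA, hB]
    linear_combination (f x ^ 2 * ψ x) * heig x
  have step2 : (∑' x : ℤ, (E * (f x * ψ x) ^ 2 + (A x + B x)))
      = E * (∑' x : ℤ, (f x * ψ x) ^ 2) + ((∑' x, A x) + (∑' x, B x)) := by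
    rw [Summable.tsum_add sE (sA.add sB), Summable.tsum_add sA sB, tsum_mul_left]
  have step3 : (∑' x, A x) = ∑' x, A (x + 1) :=
    ((Equiv.addRight (1 : ℤ)).tsum_eq A).symm
  have step4 : (∑' x, A (x + 1)) + (∑' x, B x)
      = ∑' x : ℤ, -(h x (x + 1) * ψ x * ψ (x + 1) * (f (x + 1) - f x) ^ 2) := by
    rw [← Summable.tsum_add sA' sB]
    refine tsum_congr fun x => ?_
    simp only [hA, hB, add_sub_cancel_right]
    rw [hsym (x + 1) x]
    ring
  rw [step1, step2, step3, step4, tsum_neg]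
  ring

lemma clamp_lip (a b : ℝ) : |max 0 (min 1 a) - max 0 (min 1 b)| ≤ |a - b| := by
  calc |max 0 (min 1 a) - max 0 (min 1 b)|
      = |max (min 1 a) 0 - max (min 1 b) 0| := by rw [max_comm, max_comm (min 1 b)]
    _ ≤ |min 1 a - min 1 b| := abs_max_sub_max_le_abs _ _ _
    _ ≤ max |1 - 1| |a - b| := abs_min_sub_min_le_max 1 a 1 b
    _ = |a - b| := by simp

/-- there is a universal constant `C` such that for any real symmetric
tridiagonal matrix `h` with eigenvector `ψ` of eigenvalue `E`, any integer `ℓ > 0`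
and any `y`, there is a unit vector `ξ` with
`⟨ξ|h|ξ⟩ ≤ E + C/ℓ² · ‖h_od‖` supported either on `x < y + ℓ` or on `x > y - ℓ`
(`M` is any bound on the off-diagonal entries, e.g. `M = ‖h_od‖`). -/
theorem tridiagonal_localization :
    ∃ C : ℝ, 0 < C ∧
      ∀ (h : ℤ → ℤ → ℝ), (∀ x y, h x y = h y x) → (∀ x y : ℤ, 1 < |x - y| → h x y = 0) →
      ∀ (ψ : ℤ → ℝ), (Function.support ψ).Finite → ψ ≠ 0 →
      ∀ (E : ℝ),
        (∀ x : ℤ, h x (x - 1) * ψ (x - 1) + h x x * ψ x + h x (x + 1) * ψ (x + 1) = E * ψ x) →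
      ∀ (M : ℝ), (∀ x : ℤ, |h x (x + 1)| ≤ M) →
      ∀ (ℓ y : ℤ), 0 < ℓ →
      ∃ ξ : ℤ → ℝ, (Function.support ξ).Finite ∧ (∑' x : ℤ, (ξ x) ^ 2) = 1 ∧
        triQF h ξ ≤ E + C / (ℓ : ℝ) ^ 2 * M ∧
        ((∀ x : ℤ, y + ℓ ≤ x → ξ x = 0) ∨ (∀ x : ℤ, x ≤ y - ℓ → ξ x = 0)) := by
  refine ⟨4, by norm_num, ?_⟩
  intro h hsym _hod ψ hψ hψ0 E heig M hM ℓ y hℓ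
  have hS := S3_fin hψ
  have hM0 : 0 ≤ M := le_trans (abs_nonneg _) (hM 0)
  have hℓR : (0 : ℝ) < (ℓ : ℝ) := by exact_mod_cast hℓ
  have sumψ2 : Summable fun x : ℤ => (ψ x) ^ 2 :=
    sum_fin hS fun x hx => by obtain ⟨h1, _, _⟩ := S3_zero hx; simp [h1]
  have sumψ2' : Summable fun x : ℤ => (ψ (x + 1)) ^ 2 :=
    sum_fin hS fun x hx => by obtain ⟨_, h2, _⟩ := S3_zero hx; simp [h2]
  set P := ∑' x : ℤ, (ψ x) ^ 2 with hPdef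
  have hPshift : (∑' x : ℤ, (ψ (x + 1)) ^ 2) = P :=
    (Equiv.addRight (1 : ℤ)).tsum_eq (fun x => (ψ x) ^ 2)
  have hPpos : 0 < P := by
    obtain ⟨x0, hx0⟩ := Function.ne_iff.mp hψ0
    rw [Pi.zero_apply] at hx0
    exact Summable.tsum_pos sumψ2 (fun i => sq_nonneg _) x0 (by positivity)
  -- key construction: normalize u · ψ
  have key : ∀ u : ℤ → ℝ, (∀ x : ℤ, (u (x + 1) - u x) ^ 2 ≤ (1 / (ℓ : ℝ)) ^ 2) →
      P / 4 ≤ (∑' x : ℤ, (u x * ψ x) ^ 2) →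
      ∃ ξ : ℤ → ℝ, (Function.support ξ).Finite ∧ (∑' x : ℤ, (ξ x) ^ 2) = 1 ∧
        triQF h ξ ≤ E + 4 / (ℓ : ℝ) ^ 2 * M ∧ ∀ x : ℤ, u x = 0 → ξ x = 0 := by
    intro u hlip hN
    set N := ∑' x : ℤ, (u x * ψ x) ^ 2 with hNdef
    have hNpos : 0 < N := lt_of_lt_of_le (by positivity) hN
    have hsq : Real.sqrt N ^ 2 = N := Real.sq_sqrt hNpos.le
    have hsqpos : 0 < Real.sqrt N := Real.sqrt_pos.mpr hNpos
    refine ⟨fun x => (Real.sqrt N)⁻¹ * (u x * ψ x), ?_, ?_, ?_, ?_⟩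
    · refine hψ.subset fun x hx => ?_
      simp only [Function.mem_support] at hx ⊢
      intro h0; exact hx (by simp [h0])
    · have hpt : ∀ x : ℤ, ((Real.sqrt N)⁻¹ * (u x * ψ x)) ^ 2
          = (Real.sqrt N)⁻¹ ^ 2 * (u x * ψ x) ^ 2 := fun x => by ring
      rw [tsum_congr hpt, tsum_mul_left, ← hNdef, inv_pow, hsq]
      exact inv_mul_cancel₀ hNpos.ne'
    · rw [triQF_smul h ((Real.sqrt N)⁻¹) (fun x => u x * ψ x),
        triQF_mul_eigen h hsym hψ E heig u, ← hNdef]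
      set err := ∑' x : ℤ, h x (x + 1) * ψ x * ψ (x + 1) * (u (x + 1) - u x) ^ 2 with herr
      have sAbs : Summable (fun x : ℤ =>
          |h x (x + 1) * ψ x * ψ (x + 1) * (u (x + 1) - u x) ^ 2|) :=
        sum_fin hS fun x hx => by obtain ⟨h1, _, _⟩ := S3_zero hx; simp [h1]
      have sMaj : Summable (fun x : ℤ =>
          M * (1 / (ℓ : ℝ)) ^ 2 / 2 * ((ψ x) ^ 2 + (ψ (x + 1)) ^ 2)) :=
        (sumψ2.add sumψ2').mul_left _
      have habs : |err| ≤ M * (1 / (ℓ : ℝ)) ^ 2 * P := by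
        have h1 : |err| ≤ ∑' x : ℤ,
            |h x (x + 1) * ψ x * ψ (x + 1) * (u (x + 1) - u x) ^ 2| := by
          simpa only [Real.norm_eq_abs] using
            norm_tsum_le_tsum_norm (f := fun x : ℤ =>
              h x (x + 1) * ψ x * ψ (x + 1) * (u (x + 1) - u x) ^ 2)
              (by simpa only [Real.norm_eq_abs] using sAbs)
        have h2 : ∀ x : ℤ, |h x (x + 1) * ψ x * ψ (x + 1) * (u (x + 1) - u x) ^ 2|
            ≤ M * (1 / (ℓ : ℝ)) ^ 2 / 2 * ((ψ x) ^ 2 + (ψ (x + 1)) ^ 2) := by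
          intro x
          have e1 := hM x
          have e2 := hlip x
          have e3 : |ψ x| * |ψ (x + 1)| ≤ ((ψ x) ^ 2 + (ψ (x + 1)) ^ 2) / 2 := by
            nlinarith [sq_nonneg (|ψ x| - |ψ (x + 1)|), sq_abs (ψ x), sq_abs (ψ (x + 1))]
          calc |h x (x + 1) * ψ x * ψ (x + 1) * (u (x + 1) - u x) ^ 2|
              = |h x (x + 1)| * |ψ x| * |ψ (x + 1)| * (u (x + 1) - u x) ^ 2 := by
                rw [abs_mul, abs_mul, abs_mul, abs_pow, sq_abs]
            _ ≤ M * |ψ x| * |ψ (x + 1)| * (1 / (ℓ : ℝ)) ^ 2 := by gcongr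
            _ ≤ M * (1 / (ℓ : ℝ)) ^ 2 / 2 * ((ψ x) ^ 2 + (ψ (x + 1)) ^ 2) := by
                nlinarith [mul_le_mul_of_nonneg_left e3 hM0, sq_nonneg (1 / (ℓ : ℝ))]
        have h3 := Summable.tsum_le_tsum h2 sAbs sMaj
        have h4 : (∑' x : ℤ, M * (1 / (ℓ : ℝ)) ^ 2 / 2 * ((ψ x) ^ 2 + (ψ (x + 1)) ^ 2))
            = M * (1 / (ℓ : ℝ)) ^ 2 / 2 * (P + P) := by
          rw [tsum_mul_left, Summable.tsum_add sumψ2 sumψ2', hPshift]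
        have h5 : M * (1 / (ℓ : ℝ)) ^ 2 / 2 * (P + P) = M * (1 / (ℓ : ℝ)) ^ 2 * P := by ring
        linarith
      have hend : -err ≤ (4 / (ℓ : ℝ) ^ 2 * M) * N := by
        have ha : -err ≤ |err| := by
          calc -err ≤ |(-err)| := le_abs_self _
            _ = |err| := abs_neg err
        have hP4 : P ≤ 4 * N := by linarith
        have hb : M * (1 / (ℓ : ℝ)) ^ 2 * P ≤ M * (1 / (ℓ : ℝ)) ^ 2 * (4 * N) :=
          mul_le_mul_of_nonneg_left hP4 (by positivity)
        have hc : M * (1 / (ℓ : ℝ)) ^ 2 * (4 * N) = (4 / (ℓ : ℝ) ^ 2 * M) * N := by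
          field_simp
        linarith
      rw [inv_pow, hsq]
      have hEq : N⁻¹ * (E * N - err) = E + (-err) / N := by
        field_simp
        ring
      rw [hEq]
      have : (-err) / N ≤ 4 / (ℓ : ℝ) ^ 2 * M := by
        rw [div_le_iff₀ hNpos]; exact hend
      linarith
    · intro x hx; simp [hx]
  -- the two cutoffs
  set f : ℤ → ℝ := fun x => max 0 (min 1 (((y : ℝ) + (ℓ : ℝ) - (x : ℝ)) / (ℓ : ℝ))) with hf
  set g : ℤ → ℝ := fun x => 1 - f x with hg
  have hflip : ∀ x : ℤ, (f (x + 1) - f x) ^ 2 ≤ (1 / (ℓ : ℝ)) ^ 2 := by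
    intro x
    have hd : |f (x + 1) - f x| ≤ 1 / (ℓ : ℝ) := by
      have hc := clamp_lip (((y : ℝ) + (ℓ : ℝ) - ((x : ℝ) + 1)) / (ℓ : ℝ))
        (((y : ℝ) + (ℓ : ℝ) - (x : ℝ)) / (ℓ : ℝ))
      have he : ((y : ℝ) + (ℓ : ℝ) - ((x : ℝ) + 1)) / (ℓ : ℝ)
          - ((y : ℝ) + (ℓ : ℝ) - (x : ℝ)) / (ℓ : ℝ) = -(1 / (ℓ : ℝ)) := by
        field_simp
        ring
      rw [he, abs_neg, abs_of_pos (div_pos one_pos hℓR)] at hc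
      simp only [hf]
      rw [show ((x + 1 : ℤ) : ℝ) = (x : ℝ) + 1 by push_cast; ring]
      exact hc
    calc (f (x + 1) - f x) ^ 2 = |f (x + 1) - f x| ^ 2 := (sq_abs _).symm
      _ ≤ (1 / (ℓ : ℝ)) ^ 2 := by
          exact pow_le_pow_left₀ (abs_nonneg _) hd 2
  have hglip : ∀ x : ℤ, (g (x + 1) - g x) ^ 2 ≤ (1 / (ℓ : ℝ)) ^ 2 := by
    intro x
    have : (g (x + 1) - g x) ^ 2 = (f (x + 1) - f x) ^ 2 := by
      simp only [hg]; ring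
    rw [this]; exact hflip x
  have hf0 : ∀ x : ℤ, y + ℓ ≤ x → f x = 0 := by
    intro x hx
    have hxr : (y : ℝ) + (ℓ : ℝ) ≤ (x : ℝ) := by exact_mod_cast hx
    have ht : ((y : ℝ) + (ℓ : ℝ) - (x : ℝ)) / (ℓ : ℝ) ≤ 0 :=
      div_nonpos_of_nonpos_of_nonneg (by linarith) hℓR.le
    simp only [hf]
    exact max_eq_left (le_trans (min_le_right _ _) ht)
  have hg0 : ∀ x : ℤ, x ≤ y - ℓ → g x = 0 := by
    intro x hx
    have hxr : (x : ℝ) ≤ (y : ℝ) - (ℓ : ℝ) := by exact_mod_cast hx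
    have ht : (1 : ℝ) ≤ ((y : ℝ) + (ℓ : ℝ) - (x : ℝ)) / (ℓ : ℝ) := by
      rw [le_div_iff₀ hℓR]; linarith
    have hfx : f x = 1 := by
      simp only [hf]
      rw [min_eq_left ht, max_eq_right (by norm_num : (0 : ℝ) ≤ 1)]
    simp only [hg, hfx, sub_self]
  have sf : Summable (fun x : ℤ => (f x * ψ x) ^ 2) :=
    sum_fin hS fun x hx => by obtain ⟨h1, _, _⟩ := S3_zero hx; simp [h1]
  have sg : Summable (fun x : ℤ => (g x * ψ x) ^ 2) :=
    sum_fin hS fun x hx => by obtain ⟨h1, _, _⟩ := S3_zero hx; simp [h1]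
  have hsum2 : P / 2 ≤ (∑' x : ℤ, (f x * ψ x) ^ 2) + (∑' x : ℤ, (g x * ψ x) ^ 2) := by
    have hpt : ∀ x : ℤ, (ψ x) ^ 2 / 2 ≤ (f x * ψ x) ^ 2 + (g x * ψ x) ^ 2 := by
      intro x
      have h01 : g x = 1 - f x := rfl
      rw [h01]
      nlinarith [sq_nonneg ((2 * f x - 1) * ψ x)]
    calc P / 2 = ∑' x : ℤ, (ψ x) ^ 2 / 2 := by rw [tsum_div_const]
      _ ≤ ∑' x : ℤ, ((f x * ψ x) ^ 2 + (g x * ψ x) ^ 2) :=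
          Summable.tsum_le_tsum hpt (sumψ2.div_const 2) (sf.add sg)
      _ = _ := Summable.tsum_add sf sg
  by_cases hc : P / 4 ≤ ∑' x : ℤ, (f x * ψ x) ^ 2
  · obtain ⟨ξ, a, b, c, d⟩ := key f hflip hc
    exact ⟨ξ, a, b, c, Or.inl fun x hx => d x (hf0 x hx)⟩
  · push_neg at hc
    have hcg : P / 4 ≤ ∑' x : ℤ, (g x * ψ x) ^ 2 := by linarith
    obtain ⟨ξ, a, b, c, d⟩ := key g hglip hcg
    exact ⟨ξ, a, b, c, Or.inr fun x hx => d x (hg0 x hx)⟩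
end

section
/- For a quantum state ψ on N qubits with real amplitudes in the computational basis, the Shannon entropy S of the measurement distribution in the computational basis satisfies S ≥ (1 - 1/ln 2)N + (1/ln 2)⟨ψ|X|ψ⟩, where X = ∑_i X_i is the total transverse field operator. -/
open Real Set

noncomputable def pfun (x : ℝ) : ℝ := 2*x/Real.sqrt (1-x^2) - (Real.log (1+x) - Real.log (1-x))
noncomputable def gfun (x : ℝ) : ℝ := 2 - 2*Real.sqrt (1-x^2) - ((1+x)*Real.log (1+x) + (1-x)*Real.log (1-x))

lemma hs_pos {x : ℝ} (h0 : 0 ≤ x) (h1 : x < 1) : 0 < 1 - x^2 := by nlinarith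

lemma hasDerivAt_s {x : ℝ} (h : 0 < 1 - x^2) :
    HasDerivAt (fun y => Real.sqrt (1 - y^2)) (-x / Real.sqrt (1-x^2)) x := by
  have h1 : HasDerivAt (fun y : ℝ => 1 - y^2) (-(2*x)) x := by
    simpa using ((hasDerivAt_pow 2 x).const_sub 1)
  have h2 := (Real.hasDerivAt_sqrt h.ne').comp x h1
  refine h2.congr_deriv ?_
  have hs0 : Real.sqrt (1-x^2) ≠ 0 := (Real.sqrt_pos.2 h).ne'
  field_simp

lemma hasDerivAt_p {x : ℝ} (h0 : 0 ≤ x) (h1 : x < 1) :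
    HasDerivAt pfun (2/(Real.sqrt (1-x^2))^3 - 2/(1-x^2)) x := by
  have hpos := hs_pos h0 h1
  have hs : (0:ℝ) < Real.sqrt (1-x^2) := Real.sqrt_pos.2 hpos
  have hsq : Real.sqrt (1-x^2) ^ 2 = 1 - x^2 := Real.sq_sqrt hpos.le
  have hd1 : HasDerivAt (fun y => 2*y/Real.sqrt (1-y^2))
      ((2 * Real.sqrt (1-x^2) - 2*x*(-x/Real.sqrt (1-x^2)))/(Real.sqrt (1-x^2))^2) x := by
    exact (((hasDerivAt_id x).const_mul 2).div (hasDerivAt_s hpos) hs.ne').congr_deriv (by simp)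
  have hd2 : HasDerivAt (fun y => Real.log (1+y)) (1/(1+x)) x := by
    have := (Real.hasDerivAt_log (x := 1+x) (by nlinarith)).comp x
      ((hasDerivAt_id x).const_add 1)
    simp only [one_div] at this ⊢
    exact this.congr_deriv (by simp)
  have hd3 : HasDerivAt (fun y => Real.log (1-y)) (-(1/(1-x))) x := by
    have := (Real.hasDerivAt_log (x := 1-x) (by nlinarith)).comp x
      ((hasDerivAt_id x).neg.const_add 1)
    field_simp at this ⊢
    exact this
  have := hd1.sub (hd2.sub hd3)
  refine this.congr_deriv ?_
  have hx1 : (1:ℝ)+x ≠ 0 := by nlinarith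
  have hx2 : (1:ℝ)-x ≠ 0 := by nlinarith
  field_simp
  linear_combination (2*(1-x^2)^2) * hsq

lemma hasDerivAt_g {x : ℝ} (h0 : 0 ≤ x) (h1 : x < 1) :
    HasDerivAt gfun (pfun x) x := by
  have hpos := hs_pos h0 h1
  have hs : (0:ℝ) < Real.sqrt (1-x^2) := Real.sqrt_pos.2 hpos
  have hx1 : (0:ℝ) < 1 + x := by nlinarith
  have hx2 : (0:ℝ) < 1 - x := by nlinarith
  have hd1 : HasDerivAt (fun y : ℝ => 2 - 2*Real.sqrt (1-y^2)) (-(2*(-x/Real.sqrt (1-x^2)))) x :=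
    ((hasDerivAt_s hpos).const_mul 2).const_sub 2
  have hl1 : HasDerivAt (fun y : ℝ => 1 + y) 1 x := (hasDerivAt_id x).const_add 1
  have hl2 : HasDerivAt (fun y : ℝ => 1 - y) (-1) x := by
    exact (hasDerivAt_id x).const_sub 1
  have hd2 : HasDerivAt (fun y : ℝ => (1+y)*Real.log (1+y))
      (1 * Real.log (1+x) + (1+x) * ((1+x)⁻¹ * 1)) x :=
    hl1.mul (((Real.hasDerivAt_log hx1.ne').comp x hl1))
  have hd3 : HasDerivAt (fun y : ℝ => (1-y)*Real.log (1-y))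
      ((-1) * Real.log (1-x) + (1-x) * ((1-x)⁻¹ * (-1))) x :=
    hl2.mul (((Real.hasDerivAt_log hx2.ne').comp x hl2))
  have := hd1.sub (hd2.add hd3)
  refine this.congr_deriv ?_
  unfold pfun
  field_simp
  ring

lemma pfun_nonneg {x : ℝ} (h0 : 0 ≤ x) (h1 : x < 1) : 0 ≤ pfun x := by
  have hmono : MonotoneOn pfun (Set.Ico (0:ℝ) 1) := by
    apply monotoneOn_of_deriv_nonneg (convex_Ico 0 1)
    · intro y hy
      exact (hasDerivAt_p hy.1 hy.2).continuousAt.continuousWithinAt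
    · intro y hy
      rw [interior_Ico] at hy
      exact (hasDerivAt_p hy.1.le hy.2).differentiableAt.differentiableWithinAt
    · intro y hy
      rw [interior_Ico] at hy
      rw [(hasDerivAt_p hy.1.le hy.2).deriv]
      have hpos := hs_pos hy.1.le hy.2
      have hs : (0:ℝ) < Real.sqrt (1-y^2) := Real.sqrt_pos.2 hpos
      have hsq : Real.sqrt (1-y^2) ^ 2 = 1 - y^2 := Real.sq_sqrt hpos.le
      have hle : Real.sqrt (1-y^2) ≤ 1 := Real.sqrt_le_one.2 (by nlinarith)
      rw [sub_nonneg, div_le_div_iff₀ hpos (by positivity)]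
      nlinarith [pow_pos hs 3]
  have h00 : pfun 0 = 0 := by simp [pfun]
  rw [← h00]
  exact hmono (by constructor <;> norm_num) ⟨h0, h1⟩ h0

lemma gfun_nonneg {x : ℝ} (h0 : 0 ≤ x) (h1 : x < 1) : 0 ≤ gfun x := by
  have hmono : MonotoneOn gfun (Set.Ico (0:ℝ) 1) := by
    apply monotoneOn_of_deriv_nonneg (convex_Ico 0 1)
    · intro y hy
      exact (hasDerivAt_g hy.1 hy.2).continuousAt.continuousWithinAt
    · intro y hy
      rw [interior_Ico] at hy
      exact (hasDerivAt_g hy.1.le hy.2).differentiableAt.differentiableWithinAt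
    · intro y hy
      rw [interior_Ico] at hy
      rw [(hasDerivAt_g hy.1.le hy.2).deriv]
      exact pfun_nonneg hy.1.le hy.2
  have h00 : gfun 0 = 0 := by simp [gfun]
  rw [← h00]
  exact hmono (by constructor <;> norm_num) ⟨h0, h1⟩ h0

lemma core {t : ℝ} (h0 : 0 ≤ t) (h1 : t < 1) :
    (1+t)*Real.log (1+t) + (1-t)*Real.log (1-t) ≤ 2 - 2*Real.sqrt (1-t^2) := by
  have := gfun_nonneg h0 h1
  unfold gfun at this
  linarith

lemma twoPoint_aux {x y : ℝ} (hy : 0 < y) (hxy : y ≤ x) :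
    x * Real.log x + y * Real.log y - (x+y) * Real.log ((x+y)/2)
      ≤ (Real.sqrt x - Real.sqrt y)^2 := by
  have hx : 0 < x := lt_of_lt_of_le hy hxy
  have hsum : 0 < x + y := by linarith
  set m := (x+y)/2 with hm_def
  set t := (x-y)/(x+y) with ht_def
  have hm : 0 < m := by positivity
  have ht0 : 0 ≤ t := div_nonneg (by linarith) hsum.le
  have ht1 : t < 1 := by rw [ht_def, div_lt_one hsum]; linarith
  have h1t : (0:ℝ) < 1 + t := by linarith
  have h2t : (0:ℝ) < 1 - t := by linarith
  have hxe : x = m*(1+t) := by rw [hm_def, ht_def]; field_simp; ring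
  have hye : y = m*(1-t) := by rw [hm_def, ht_def]; field_simp; ring
  have e1 : Real.log x = Real.log m + Real.log (1+t) := by
    rw [hxe, Real.log_mul hm.ne' h1t.ne']
  have e2 : Real.log y = Real.log m + Real.log (1-t) := by
    rw [hye, Real.log_mul hm.ne' h2t.ne']
  have hx2 : Real.sqrt x ^ 2 = x := Real.sq_sqrt hx.le
  have hy2 : Real.sqrt y ^ 2 = y := Real.sq_sqrt hy.le
  have hmul : Real.sqrt x * Real.sqrt y = m * Real.sqrt (1 - t^2) := by
    rw [← Real.sqrt_mul hx.le]
    rw [show x*y = m^2*(1-t^2) by rw [hxe, hye]; ring]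
    rw [Real.sqrt_mul (sq_nonneg m), Real.sqrt_sq hm.le]
  have hLHS : x * Real.log x + y * Real.log y - (x+y) * Real.log m
      = m*((1+t)*Real.log (1+t) + (1-t)*Real.log (1-t)) := by
    rw [e1, e2]
    linear_combination Real.log (1+t) * hxe + Real.log (1-t) * hye
  have hRHS : (Real.sqrt x - Real.sqrt y)^2 = m*(2 - 2*Real.sqrt (1-t^2)) := by
    have h : (Real.sqrt x - Real.sqrt y)^2
        = Real.sqrt x ^2 + Real.sqrt y ^2 - 2*(Real.sqrt x * Real.sqrt y) := by ring
    rw [h, hx2, hy2, hmul]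
    linear_combination hxe + hye
  rw [hLHS, hRHS]
  exact mul_le_mul_of_nonneg_left (core ht0 ht1) hm.le

lemma twoPoint {x y : ℝ} (hx : 0 ≤ x) (hy : 0 ≤ y) :
    x * Real.log x + y * Real.log y - (x+y) * Real.log ((x+y)/2)
      ≤ (Real.sqrt x - Real.sqrt y)^2 := by
  have main : ∀ a b : ℝ, 0 ≤ a → 0 ≤ b → b ≤ a →
      a * Real.log a + b * Real.log b - (a+b) * Real.log ((a+b)/2)
        ≤ (Real.sqrt a - Real.sqrt b)^2 := by
    intro a b ha hb hba
    rcases eq_or_lt_of_le hb with hb0 | hb0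
    · rcases eq_or_lt_of_le ha with ha0 | ha0
      · simp [← ha0, ← hb0]
      · rw [← hb0]
        have hlog : Real.log ((a+0)/2) = Real.log a - Real.log 2 := by
          rw [add_zero, Real.log_div ha0.ne' two_ne_zero]
        rw [hlog]
        have hsa : (Real.sqrt a - Real.sqrt 0)^2 = a := by
          simp [Real.sq_sqrt ha]
        rw [hsa]
        have hl2 : Real.log 2 < 1 := by
          have := Real.log_two_lt_d9
          linarith
        simp only [zero_mul, add_zero, Real.log_zero]
        nlinarith
    · exact twoPoint_aux hb0 hba
  rcases le_total y x with h | h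
  · exact main x y hx hy h
  · have := main y x hy hx h
    have h1 : (Real.sqrt y - Real.sqrt x)^2 = (Real.sqrt x - Real.sqrt y)^2 := by ring
    rw [h1] at this
    rw [add_comm y x] at this
    linarith

open Finset in
lemma sum_cons_decomp (N : ℕ) (F : (Fin (N+1) → Bool) → ℝ) :
    ∑ u : Fin (N+1) → Bool, F u
      = (∑ v : Fin N → Bool, F (Fin.cons true v))
        + ∑ v : Fin N → Bool, F (Fin.cons false v) := by
  rw [← Equiv.sum_comp (Fin.consEquiv (fun _ => Bool)) F, Fintype.sum_prod_type,
    Fintype.sum_bool]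
  simp [Fin.consEquiv]

open Finset in
lemma LSI (N : ℕ) (f : (Fin N → Bool) → ℝ) :
    ∑ u : Fin N → Bool, (f u)^2 * Real.log ((f u)^2)
      ≤ (∑ u : Fin N → Bool, (f u)^2) * Real.log (∑ u : Fin N → Bool, (f u)^2)
        - N * Real.log 2 * (∑ u : Fin N → Bool, (f u)^2)
        + (1/2) * ∑ u : Fin N → Bool, ∑ i,
            (f u - f (Function.update u i (!(u i))))^2 := by
  induction N with
  | zero => simp
  | succ n ih =>
    set f1 : (Fin n → Bool) → ℝ := fun v => f (Fin.cons true v) with hf1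
    set f0 : (Fin n → Bool) → ℝ := fun v => f (Fin.cons false v) with hf0
    set T1 := ∑ v : Fin n → Bool, (f1 v)^2 with hT1
    set T0 := ∑ v : Fin n → Bool, (f0 v)^2 with hT0
    have hT1n : 0 ≤ T1 := sum_nonneg fun v _ => sq_nonneg _
    have hT0n : 0 ≤ T0 := sum_nonneg fun v _ => sq_nonneg _
    -- decompose sums
    have hA : ∑ u : Fin (n+1) → Bool, (f u)^2 * Real.log ((f u)^2)
        = (∑ v, (f1 v)^2 * Real.log ((f1 v)^2)) + ∑ v, (f0 v)^2 * Real.log ((f0 v)^2) :=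
      sum_cons_decomp n _
    have hB : ∑ u : Fin (n+1) → Bool, (f u)^2 = T1 + T0 := sum_cons_decomp n _
    -- decompose Dirichlet form
    have hflip : ∀ (b : Bool) (v : Fin n → Bool),
        ∑ i : Fin (n+1), (f (Fin.cons b v) - f (Function.update (Fin.cons b v) i
            (!((Fin.cons b v : Fin (n+1) → Bool) i))))^2
        = (f (Fin.cons b v) - f (Fin.cons (!b) v))^2
          + ∑ i : Fin n, (f (Fin.cons b v) - f (Fin.cons b (Function.update v i (!(v i)))))^2 := by
      intro b v
      rw [Fin.sum_univ_succ]
      congr 1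
      · rw [Fin.cons_zero, Fin.update_cons_zero]
      · refine Finset.sum_congr rfl fun i _ => ?_
        rw [Fin.cons_succ, ← Fin.cons_update]
    have hD : ∑ u : Fin (n+1) → Bool, ∑ i, (f u - f (Function.update u i (!(u i))))^2
        = 2 * (∑ v, (f1 v - f0 v)^2)
          + ((∑ v, ∑ i, (f1 v - f1 (Function.update v i (!(v i))))^2)
            + ∑ v, ∑ i, (f0 v - f0 (Function.update v i (!(v i))))^2) := by
      rw [sum_cons_decomp n]
      have e1 : ∀ v, (∑ i : Fin (n+1), (f (Fin.cons true v)
            - f (Function.update (Fin.cons true v) i (!((Fin.cons true v : Fin (n+1) → Bool) i))))^2)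
          = (f1 v - f0 v)^2 + ∑ i : Fin n, (f1 v - f1 (Function.update v i (!(v i))))^2 := by
        intro v; rw [hflip true v]; rfl
      have e0 : ∀ v, (∑ i : Fin (n+1), (f (Fin.cons false v)
            - f (Function.update (Fin.cons false v) i (!((Fin.cons false v : Fin (n+1) → Bool) i))))^2)
          = (f0 v - f1 v)^2 + ∑ i : Fin n, (f0 v - f0 (Function.update v i (!(v i))))^2 := by
        intro v; rw [hflip false v]; rfl
      rw [Finset.sum_congr rfl (fun v _ => e1 v), Finset.sum_congr rfl (fun v _ => e0 v),
        Finset.sum_add_distrib, Finset.sum_add_distrib]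
      have : ∑ v, (f0 v - f1 v)^2 = ∑ v, (f1 v - f0 v)^2 := by
        refine Finset.sum_congr rfl fun v _ => by ring
      rw [this]; ring
    -- Cauchy-Schwarz
    have hcs : ∑ v, f1 v * f0 v ≤ Real.sqrt T1 * Real.sqrt T0 :=
      Real.sum_mul_le_sqrt_mul_sqrt _ _ _
    have hcross : (Real.sqrt T1 - Real.sqrt T0)^2 ≤ ∑ v, (f1 v - f0 v)^2 := by
      have h1 : (Real.sqrt T1 - Real.sqrt T0)^2
          = T1 + T0 - 2*(Real.sqrt T1 * Real.sqrt T0) := by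
        rw [sub_sq, Real.sq_sqrt hT1n, Real.sq_sqrt hT0n]; ring
      have h2 : ∑ v, (f1 v - f0 v)^2 = T1 + T0 - 2*∑ v, f1 v * f0 v := by
        rw [hT1, hT0, Finset.mul_sum, ← Finset.sum_add_distrib, ← Finset.sum_sub_distrib]
        exact Finset.sum_congr rfl fun v _ => by ring
      rw [h1, h2]
      linarith
    have htp := twoPoint hT1n hT0n
    -- the log(T/2) handling
    have hhalf : (T1 + T0) * Real.log ((T1+T0)/2)
        = (T1+T0) * Real.log (T1+T0) - Real.log 2 * (T1+T0) := by
      rcases eq_or_lt_of_le (by positivity : (0:ℝ) ≤ T1 + T0) with h | h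
      · rw [← h]; simp
      · rw [Real.log_div h.ne' two_ne_zero]; ring
    have ih1 := ih f1
    have ih0 := ih f0
    rw [hA, hB, hD]
    push_cast
    rw [← hT0] at ih0
    linarith [htp, hcross, ih1, ih0, hhalf]



/-- log-Sobolev lower bound on the computational-basis measurement entropy:
for a real-amplitude state `ψ` on `N` qubits,
`S^{comp}(ψ) ≥ (1 - 1/ln 2) N + (1/ln 2) ⟨ψ|X|ψ⟩`,
where `X = ∑_i X_i` and `⟨ψ|X|ψ⟩ = ∑_u ∑_i ψ(u) ψ(u with bit i flipped)`. -/
theorem entropy_ge_logSobolev (N : ℕ) (ψ : (Fin N → Bool) → ℝ)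
    (hnorm : ∑ u : Fin N → Bool, (ψ u) ^ 2 = 1) :
    (1 - 1 / Real.log 2) * N
      + (1 / Real.log 2) *
        (∑ u : Fin N → Bool, ∑ i : Fin N, ψ u * ψ (Function.update u i (!(u i))))
    ≤ -∑ u : Fin N → Bool, (ψ u) ^ 2 * Real.logb 2 ((ψ u) ^ 2) := by
  have hL : 0 < Real.log 2 := Real.log_pos one_lt_two
  have hinv : ∀ i : Fin N, Function.Involutive
      (fun u : Fin N → Bool => Function.update u i (!(u i))) := by
    intro i u
    simp only [Function.update_self, Bool.not_not, Function.update_idem,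
      Function.update_eq_self]
  have h1 : ∀ i : Fin N, ∑ u : Fin N → Bool, (ψ (Function.update u i (!(u i))))^2 = 1 := by
    intro i
    rw [← hnorm]
    exact Fintype.sum_equiv ((hinv i).toPerm _) _ _ (fun u => rfl)
  have e1 : ∑ u : Fin N → Bool, ∑ _i : Fin N, (ψ u)^2 = (N:ℝ) := by
    have : ∀ u : Fin N → Bool, ∑ _i : Fin N, (ψ u)^2 = (N:ℝ)*(ψ u)^2 := by
      intro u
      rw [Finset.sum_const, Finset.card_univ, Fintype.card_fin, nsmul_eq_mul]
    rw [Finset.sum_congr rfl fun u _ => this u, ← Finset.mul_sum, hnorm, mul_one]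
  have e2 : ∑ u : Fin N → Bool, ∑ i : Fin N, (ψ (Function.update u i (!(u i))))^2 = (N:ℝ) := by
    rw [Finset.sum_comm]
    rw [Finset.sum_congr rfl fun i _ => h1 i]
    simp
  set X := ∑ u : Fin N → Bool, ∑ i : Fin N, ψ u * ψ (Function.update u i (!(u i))) with hX
  have hDcalc : ∑ u : Fin N → Bool, ∑ i : Fin N,
      (ψ u - ψ (Function.update u i (!(u i))))^2 = 2*(N:ℝ) - 2*X := by
    have expand : ∀ u : Fin N → Bool, ∀ i : Fin N,
        (ψ u - ψ (Function.update u i (!(u i))))^2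
        = (ψ u)^2 + (ψ (Function.update u i (!(u i))))^2
          - 2*(ψ u * ψ (Function.update u i (!(u i)))) := fun u i => by ring
    calc ∑ u : Fin N → Bool, ∑ i : Fin N, (ψ u - ψ (Function.update u i (!(u i))))^2
        = ∑ u : Fin N → Bool, ∑ i : Fin N, ((ψ u)^2 + (ψ (Function.update u i (!(u i))))^2
            - 2*(ψ u * ψ (Function.update u i (!(u i))))) := by
          exact Finset.sum_congr rfl fun u _ => Finset.sum_congr rfl fun i _ => expand u i
      _ = (∑ u : Fin N → Bool, ∑ _i : Fin N, (ψ u)^2)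
            + (∑ u : Fin N → Bool, ∑ i : Fin N, (ψ (Function.update u i (!(u i))))^2)
            - 2*X := by
          rw [hX, Finset.mul_sum]
          rw [← Finset.sum_add_distrib, ← Finset.sum_sub_distrib]
          refine Finset.sum_congr rfl fun u _ => ?_
          rw [Finset.mul_sum, ← Finset.sum_add_distrib, ← Finset.sum_sub_distrib]
      _ = 2*(N:ℝ) - 2*X := by rw [e1, e2]; ring
  have hlsi := LSI N ψ
  rw [hnorm, hDcalc] at hlsi
  simp only [Real.log_one, mul_one, one_mul, mul_zero, zero_mul] at hlsi
  -- hlsi : ∑ ψ² log ψ² ≤ -N log 2 + (1/2)(2N - 2X)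
  set S' := ∑ u : Fin N → Bool, (ψ u)^2 * Real.log ((ψ u)^2) with hS'
  have key : (Real.log 2 - 1)*(N:ℝ) + X ≤ -S' := by linarith
  have hrhs : ∑ u : Fin N → Bool, (ψ u)^2 * Real.logb 2 ((ψ u)^2) = S' / Real.log 2 := by
    rw [hS', Finset.sum_div]
    refine Finset.sum_congr rfl fun u _ => ?_
    rw [Real.logb]
    ring
  rw [hrhs]
  have hlhs : (1 - 1 / Real.log 2) * (N:ℝ) + (1 / Real.log 2) * X
      = ((Real.log 2 - 1)*(N:ℝ) + X) / Real.log 2 := by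
    field_simp
  rw [hlhs, ← neg_div]
  gcongr
end

section
/- Let p(u) be a probability distribution over a finite set of states, each state u having an integer energy E_u with |E_u| ≤ M, let S be the Shannon entropy of p and Ē = ∑_u p(u)E_u. Let W(E) be the number of states with energy E. Then there exist two energies E_1 ≤ Ē ≤ E_2 and a probability P ∈ [0,1] such that P·E_1 + (1-P)·E_2 = Ē and P·log₂ W(E_1) + (1-P)·log₂ W(E_2) ≥ S - log₂(2M+1). -/
/-- Two-point (chord) lemma: a weighted average of points `(x e, y e)` can be dominated,
at the mean abscissa, by an affine interpolation between two of the points straddling it. -/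
lemma two_point_chord (T : Finset ℤ) (q x y : ℤ → ℝ)
    (hq : ∀ e ∈ T, 0 < q e) (hq1 : ∑ e ∈ T, q e = 1)
    (xbar ybar : ℝ) (hx : ∑ e ∈ T, q e * x e = xbar) (hy : ∑ e ∈ T, q e * y e = ybar) :
    ∃ e1 ∈ T, ∃ e2 ∈ T, ∃ P : ℝ, 0 ≤ P ∧ P ≤ 1 ∧ x e1 ≤ xbar ∧ xbar ≤ x e2 ∧
      P * x e1 + (1 - P) * x e2 = xbar ∧ ybar ≤ P * y e1 + (1 - P) * y e2 := by
  classical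
  have hT : T.Nonempty := Finset.nonempty_of_sum_ne_zero (by rw [hq1]; norm_num)
  -- for every slope s there is a point on or above the line through (xbar, ybar)
  have key : ∀ s : ℝ, ∃ e ∈ T, ybar ≤ y e - s * (x e - xbar) := by
    intro s
    have hsum' : ∑ e ∈ T, q e * (y e - s * (x e - xbar)) = ybar := by
      have : ∀ e ∈ T, q e * (y e - s * (x e - xbar))
          = q e * y e - s * (q e * x e) + s * xbar * q e := by
        intro e _; ring
      rw [Finset.sum_congr rfl this, Finset.sum_add_distrib, Finset.sum_sub_distrib,
        ← Finset.mul_sum, ← Finset.mul_sum, hx, hy, hq1]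
      ring
    have hle : ∑ e ∈ T, q e * ybar ≤ ∑ e ∈ T, q e * (y e - s * (x e - xbar)) := by
      rw [hsum', ← Finset.sum_mul, hq1, one_mul]
    obtain ⟨e, he, hee⟩ := Finset.exists_le_of_sum_le hT hle
    exact ⟨e, he, (mul_le_mul_iff_right₀ (hq e he)).mp hee⟩
  by_cases hstrict : ∃ e ∈ T, x e < xbar
  · -- there is also a point strictly to the right
    have hstrict2 : ∃ e ∈ T, xbar < x e := by
      by_contra h
      push_neg at h
      obtain ⟨e0, he0, he0lt⟩ := hstrict
      have : ∑ e ∈ T, q e * x e < ∑ e ∈ T, q e * xbar :=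
        Finset.sum_lt_sum (fun i hi => mul_le_mul_of_nonneg_left (h i hi) (hq i hi).le)
          ⟨e0, he0, mul_lt_mul_of_pos_left he0lt (hq e0 he0)⟩
      rw [hx, ← Finset.sum_mul, hq1, one_mul] at this
      exact lt_irrefl _ this
    obtain ⟨eL, heL, heLlt⟩ := hstrict
    obtain ⟨eR, heR, heRlt⟩ := hstrict2
    set A : Set ℝ := ⋃ e ∈ T.filter (fun e => x e ≤ xbar),
      {s : ℝ | ybar ≤ y e - s * (x e - xbar)} with hA
    set B : Set ℝ := ⋃ e ∈ T.filter (fun e => xbar ≤ x e),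
      {s : ℝ | ybar ≤ y e - s * (x e - xbar)} with hB
    have hclosed : ∀ (T' : Finset ℤ),
        IsClosed (⋃ e ∈ T', {s : ℝ | ybar ≤ y e - s * (x e - xbar)}) := by
      intro T'
      apply isClosed_biUnion_finset
      intro e _
      exact isClosed_le continuous_const (by continuity)
    have hAclosed : IsClosed A := hclosed _
    have hBclosed : IsClosed B := hclosed _
    have hcover : (Set.univ : Set ℝ) ⊆ A ∪ B := by
      intro s _
      obtain ⟨e, he, hee⟩ := key s
      rcases le_total (x e) xbar with hle | hle
      · exact Or.inl (Set.mem_biUnion (Finset.mem_filter.mpr ⟨he, hle⟩) hee)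
      · exact Or.inr (Set.mem_biUnion (Finset.mem_filter.mpr ⟨he, hle⟩) hee)
    have hAne : (Set.univ ∩ A).Nonempty := by
      refine ⟨(y eL - ybar) / (x eL - xbar), trivial, ?_⟩
      refine Set.mem_biUnion (Finset.mem_filter.mpr ⟨heL, heLlt.le⟩) ?_
      have hne : x eL - xbar ≠ 0 := by intro h; nlinarith
      simp only [Set.mem_setOf_eq, div_mul_cancel₀ _ hne]
      linarith
    have hBne : (Set.univ ∩ B).Nonempty := by
      refine ⟨(y eR - ybar) / (x eR - xbar), trivial, ?_⟩
      refine Set.mem_biUnion (Finset.mem_filter.mpr ⟨heR, heRlt.le⟩) ?_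
      have hne : x eR - xbar ≠ 0 := by intro h; nlinarith
      simp only [Set.mem_setOf_eq, div_mul_cancel₀ _ hne]
      linarith
    obtain ⟨s0, -, hs0A, hs0B⟩ :=
      (isPreconnected_closed_iff.mp isPreconnected_univ) A B hAclosed hBclosed hcover hAne hBne
    obtain ⟨e1, he1mem, h1⟩ := Set.mem_iUnion₂.mp hs0A
    obtain ⟨e2, he2mem, h2⟩ := Set.mem_iUnion₂.mp hs0B
    obtain ⟨he1T, hx1⟩ := Finset.mem_filter.mp he1mem
    obtain ⟨he2T, hx2⟩ := Finset.mem_filter.mp he2mem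
    simp only [Set.mem_setOf_eq] at h1 h2
    by_cases hxe : x e1 = x e2
    · -- then x e1 = xbar = x e2
      have hx1b : x e1 = xbar := le_antisymm hx1 (hxe ▸ hx2)
      refine ⟨e1, he1T, e2, he2T, 1, by norm_num, le_refl 1, hx1, hxe ▸ hx2, by
        rw [hx1b]; ring, ?_⟩
      have : x e1 - xbar = 0 := by rw [hx1b]; ring
      rw [this, mul_zero, sub_zero] at h1
      linarith
    · have hd : 0 < x e2 - x e1 := by
        rcases lt_or_ge (x e1) (x e2) with h | h
        · linarith
        · exact absurd (le_antisymm (le_trans hx1 hx2) h) hxe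
      set P : ℝ := (x e2 - xbar) / (x e2 - x e1) with hP
      have hP0 : 0 ≤ P := div_nonneg (by linarith) hd.le
      have hP1 : P ≤ 1 := (div_le_one hd).mpr (by linarith)
      have hcombo : P * x e1 + (1 - P) * x e2 = xbar := by
        have h' : P * (x e2 - x e1) = x e2 - xbar := by
          rw [hP]; exact div_mul_cancel₀ _ hd.ne'
        linear_combination -h'
      refine ⟨e1, he1T, e2, he2T, P, hP0, hP1, hx1, hx2, hcombo, ?_⟩
      have t1 : 0 ≤ P * ((y e1 - s0 * (x e1 - xbar)) - ybar) := mul_nonneg hP0 (by linarith)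
      have t2 : 0 ≤ (1 - P) * ((y e2 - s0 * (x e2 - xbar)) - ybar) :=
        mul_nonneg (by linarith) (by linarith)
      have t3 : s0 * (P * x e1 + (1 - P) * x e2) = s0 * xbar := by rw [hcombo]
      nlinarith [t1, t2, t3]
  · -- all x e = xbar
    push_neg at hstrict
    have hall : ∀ e ∈ T, x e = xbar := by
      intro e he
      by_contra hne
      have hlt : xbar < x e := lt_of_le_of_ne (hstrict e he) (Ne.symm hne)
      have : ∑ e ∈ T, q e * xbar < ∑ e ∈ T, q e * x e :=
        Finset.sum_lt_sum (fun i hi => mul_le_mul_of_nonneg_left (hstrict i hi) (hq i hi).le)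
          ⟨e, he, mul_lt_mul_of_pos_left hlt (hq e he)⟩
      rw [hx, ← Finset.sum_mul, hq1, one_mul] at this
      exact lt_irrefl _ this
    obtain ⟨e, he, hye⟩ := key 0
    rw [zero_mul, sub_zero] at hye
    exact ⟨e, he, e, he, 1, by norm_num, le_refl 1, (hall e he).le, (hall e he).ge,
      by rw [hall e he]; ring, by linarith⟩

/-- for a probability distribution `p` over states with integer energies
bounded by `M` in absolute value, with entropy `S` and mean energy `Ē`, there are energies
`E₁ ≤ Ē ≤ E₂` and `P ∈ [0,1]` with `P E₁ + (1-P) E₂ = Ē` and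
`P log₂ W(E₁) + (1-P) log₂ W(E₂) ≥ S - log₂(2M+1)`, where `W(E)` counts states of energy `E`. -/
theorem two_energy_maxwell {ι : Type*} [Fintype ι] [DecidableEq ι]
    (p : ι → ℝ) (hp : ∀ u, 0 ≤ p u) (hsum : ∑ u, p u = 1)
    (En : ι → ℤ) (M : ℕ) (hM : ∀ u, |En u| ≤ (M : ℤ))
    (S : ℝ) (hS : S = -∑ u, p u * Real.logb 2 (p u))
    (Ebar : ℝ) (hEbar : Ebar = ∑ u, p u * (En u : ℝ))
    (W : ℤ → ℕ) (hW : ∀ e, W e = (Finset.univ.filter (fun u => En u = e)).card) :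
    ∃ E1 E2 : ℤ, ∃ P : ℝ, 0 ≤ P ∧ P ≤ 1 ∧
      (E1 : ℝ) ≤ Ebar ∧ Ebar ≤ (E2 : ℝ) ∧
      P * (E1 : ℝ) + (1 - P) * (E2 : ℝ) = Ebar ∧
      S - Real.logb 2 (2 * (M : ℝ) + 1)
        ≤ P * Real.logb 2 (W E1 : ℝ) + (1 - P) * Real.logb 2 (W E2 : ℝ) := by
  classical
  -- the support of p
  set s : Finset ι := Finset.univ.filter (fun u => p u ≠ 0) with hs_def
  have hps : ∀ u ∈ s, 0 < p u := fun u hu =>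
    lt_of_le_of_ne (hp u) (Ne.symm (Finset.mem_filter.mp hu).2)
  have hrestrict : ∀ f : ι → ℝ, (∀ u, p u = 0 → f u = 0) → ∑ u, f u = ∑ u ∈ s, f u := by
    intro f hf
    refine (Finset.sum_subset (Finset.filter_subset _ _) (fun u _ hu => ?_)).symm
    have hpu : p u = 0 := by simpa [hs_def] using hu
    exact hf u hpu
  have hsum_s : ∑ u ∈ s, p u = 1 := by
    rw [← hrestrict p (fun u h => h), hsum]
  have hs_ne : s.Nonempty := Finset.nonempty_of_sum_ne_zero (by rw [hsum_s]; norm_num)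
  have hWpos : ∀ u : ι, 0 < W (En u) := fun u => by
    rw [hW]
    exact Finset.card_pos.mpr ⟨u, Finset.mem_filter.mpr ⟨Finset.mem_univ u, rfl⟩⟩
  -- occupied energy levels
  set T : Finset ℤ := s.image En with hT_def
  have hmaps : ∀ u ∈ s, En u ∈ T := fun u hu => Finset.mem_image_of_mem En hu
  have hWposT : ∀ e ∈ T, 0 < W e := by
    intro e he
    obtain ⟨u, hu, rfl⟩ := Finset.mem_image.mp he
    exact hWpos u
  set q : ℤ → ℝ := fun e => ∑ u ∈ s.filter (fun u => En u = e), p u with hq_def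
  have hq_pos : ∀ e ∈ T, 0 < q e := by
    intro e he
    obtain ⟨u, hu, rfl⟩ := Finset.mem_image.mp he
    exact Finset.sum_pos (fun v hv => hps v (Finset.mem_filter.mp hv).1)
      ⟨u, Finset.mem_filter.mpr ⟨hu, rfl⟩⟩
  have hfiber : ∀ f : ι → ℝ,
      ∑ e ∈ T, ∑ u ∈ s.filter (fun u => En u = e), f u = ∑ u ∈ s, f u :=
    fun f => Finset.sum_fiberwise_of_maps_to hmaps f
  have hq1 : ∑ e ∈ T, q e = 1 := by
    simp only [hq_def]
    rw [hfiber, hsum_s]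
  have hqx : ∑ e ∈ T, q e * (e : ℝ) = Ebar := by
    have h1 : ∀ e ∈ T, q e * (e : ℝ) = ∑ u ∈ s.filter (fun u => En u = e), p u * (En u : ℝ) := by
      intro e _
      simp only [hq_def]
      rw [Finset.sum_mul]
      exact Finset.sum_congr rfl (fun u hu => by rw [(Finset.mem_filter.mp hu).2])
    rw [Finset.sum_congr rfl h1, hfiber, hEbar]
    exact (hrestrict _ (fun u h => by simp [h])).symm
  set yb : ℝ := ∑ e ∈ T, q e * Real.logb 2 (W e) with hyb_def
  have hqy : yb = ∑ u ∈ s, p u * Real.logb 2 (W (En u)) := by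
    rw [hyb_def]
    have h1 : ∀ e ∈ T, q e * Real.logb 2 (W e)
        = ∑ u ∈ s.filter (fun u => En u = e), p u * Real.logb 2 (W (En u)) := by
      intro e _
      simp only [hq_def]
      rw [Finset.sum_mul]
      exact Finset.sum_congr rfl (fun u hu => by rw [(Finset.mem_filter.mp hu).2])
    rw [Finset.sum_congr rfl h1, hfiber]
  -- Step A : entropy bound  S - logb 2 (2M+1) ≤ yb
  have hSs : S = ∑ u ∈ s, p u * Real.logb 2 (p u)⁻¹ := by
    rw [hS, hrestrict (fun u => p u * Real.logb 2 (p u)) (fun u h => by simp [h]),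
      ← Finset.sum_neg_distrib]
    exact Finset.sum_congr rfl (fun u _ => by rw [Real.logb_inv]; ring)
  have hdiff : S - (∑ u ∈ s, p u * Real.logb 2 (W (En u)))
      = ∑ u ∈ s, p u * Real.logb 2 ((p u * (W (En u) : ℝ))⁻¹) := by
    rw [hSs, ← Finset.sum_sub_distrib]
    refine Finset.sum_congr rfl (fun u hu => ?_)
    have hpu : p u ≠ 0 := (hps u hu).ne'
    have hWu : ((W (En u) : ℝ)) ≠ 0 := (Nat.cast_pos.mpr (hWpos u)).ne'
    rw [mul_inv, Real.logb_mul (inv_ne_zero hpu) (inv_ne_zero hWu), Real.logb_inv,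
      Real.logb_inv]
    ring
  have hconc : ConcaveOn ℝ (Set.Ioi 0) (Real.logb 2) := by
    have h := strictConcaveOn_log_Ioi.concaveOn.smul (c := (Real.log 2)⁻¹) (by positivity)
    have heq : (fun x : ℝ => (Real.log 2)⁻¹ • Real.log x) = Real.logb 2 := by
      funext z
      simp [Real.logb, smul_eq_mul, div_eq_inv_mul]
    rwa [heq] at h
  have hmemIoi : ∀ u ∈ s, (p u * (W (En u) : ℝ))⁻¹ ∈ Set.Ioi (0 : ℝ) := by
    intro u hu
    have h1 := hps u hu
    have h2 := hWpos u
    have h2' : (0:ℝ) < (W (En u) : ℝ) := Nat.cast_pos.mpr h2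
    rw [Set.mem_Ioi]
    positivity
  have hJ := hconc.le_map_sum (fun u hu => (hps u hu).le) hsum_s hmemIoi
  simp only [smul_eq_mul] at hJ
  have hsum_inv : ∑ u ∈ s, p u * (p u * (W (En u) : ℝ))⁻¹
      = ∑ u ∈ s, ((W (En u) : ℝ))⁻¹ := by
    refine Finset.sum_congr rfl (fun u hu => ?_)
    have hpu : p u ≠ 0 := (hps u hu).ne'
    rw [mul_inv, ← mul_assoc, mul_inv_cancel₀ hpu, one_mul]
  have hcount : ∑ u ∈ s, ((W (En u) : ℝ))⁻¹ ≤ (T.card : ℝ) := by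
    rw [← Finset.sum_fiberwise_of_maps_to hmaps (fun u => ((W (En u) : ℝ))⁻¹)]
    have hTc : (T.card : ℝ) = ∑ _e ∈ T, (1 : ℝ) := by
      rw [Finset.sum_const, nsmul_eq_mul, mul_one]
    rw [hTc]
    refine Finset.sum_le_sum (fun e he => ?_)
    have hWe : (0:ℝ) < (W e : ℝ) := Nat.cast_pos.mpr (hWposT e he)
    have hsub : s.filter (fun u => En u = e) ⊆ Finset.univ.filter (fun u => En u = e) :=
      Finset.filter_subset_filter _ (Finset.subset_univ s)
    have hcard : (((s.filter (fun u => En u = e)).card : ℕ) : ℝ) ≤ (W e : ℝ) := by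
      rw [hW]
      exact_mod_cast Finset.card_le_card hsub
    calc ∑ u ∈ s.filter (fun u => En u = e), ((W (En u) : ℝ))⁻¹
        = ∑ u ∈ s.filter (fun u => En u = e), ((W e : ℝ))⁻¹ :=
          Finset.sum_congr rfl (fun u hu => by rw [(Finset.mem_filter.mp hu).2])
      _ = (((s.filter (fun u => En u = e)).card : ℕ) : ℝ) * ((W e : ℝ))⁻¹ := by
          rw [Finset.sum_const, nsmul_eq_mul]
      _ ≤ (W e : ℝ) * ((W e : ℝ))⁻¹ :=
          mul_le_mul_of_nonneg_right hcard (by positivity)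
      _ = 1 := mul_inv_cancel₀ hWe.ne'
  have hTcard : (T.card : ℝ) ≤ 2 * (M : ℝ) + 1 := by
    have hsub : T ⊆ Finset.Icc (-(M : ℤ)) (M : ℤ) := by
      intro e he
      obtain ⟨u, hu, rfl⟩ := Finset.mem_image.mp he
      have h := abs_le.mp (hM u)
      exact Finset.mem_Icc.mpr ⟨h.1, h.2⟩
    have h1 := Finset.card_le_card hsub
    have h2 : (Finset.Icc (-(M : ℤ)) (M : ℤ)).card = 2 * M + 1 := by
      rw [Int.card_Icc]; omega
    rw [h2] at h1
    calc (T.card : ℝ) ≤ ((2 * M + 1 : ℕ) : ℝ) := Nat.cast_le.mpr h1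
      _ = 2 * (M : ℝ) + 1 := by push_cast; ring
  have hpos : 0 < ∑ u ∈ s, p u * (p u * (W (En u) : ℝ))⁻¹ := by
    rw [hsum_inv]
    exact Finset.sum_pos (fun u _ => inv_pos.mpr (Nat.cast_pos.mpr (hWpos u))) hs_ne
  have hlogle : Real.logb 2 (∑ u ∈ s, p u * (p u * (W (En u) : ℝ))⁻¹)
      ≤ Real.logb 2 (2 * (M : ℝ) + 1) := by
    refine Real.logb_le_logb_of_le (by norm_num : (1:ℝ) < 2) hpos ?_
    rw [hsum_inv]
    exact hcount.trans hTcard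
  have hA : S - Real.logb 2 (2 * (M : ℝ) + 1) ≤ yb := by
    have h := hJ.trans hlogle
    rw [← hdiff] at h
    rw [hqy]
    linarith
  -- Step B : two-point chord lemma
  obtain ⟨e1, he1, e2, he2, P, hP0, hP1, hx1, hx2, hcombo, hval⟩ :=
    two_point_chord T q (fun e => (e : ℝ)) (fun e => Real.logb 2 (W e))
      hq_pos hq1 Ebar yb hqx hyb_def.symm
  exact ⟨e1, e2, P, hP0, hP1, hx1, hx2, hcombo, hA.trans hval⟩
end

section
/- Let H_Z be a diagonal Hamiltonian on {-1,+1}^N with n_gs ≥ 1 ground states. Then there exists a vector h ∈ {-1,0,+1}^N with at most log₂(n_gs) nonzero entries such that H_Z + ∑_i h_i Z_i has a unique ground state, and this unique ground state is a ground state of H_Z. -/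
open Finset

noncomputable def Zfield (N : ℕ) (h : Fin N → ℤ) (v : Fin N → Bool) : ℝ :=
  ∑ i, (h i : ℝ) * (if v i then 1 else -1)

lemma key (N : ℕ) : ∀ n : ℕ, ∀ (E : (Fin N → Bool) → ℝ) (G : Finset (Fin N → Bool)),
    G.card = n → G.Nonempty →
    G = Finset.univ.filter (fun v => ∀ w, E v ≤ E w) →
    ∃ h : Fin N → ℤ, (∀ i, h i = -1 ∨ h i = 0 ∨ h i = 1) ∧
      (∀ j : Fin N, (∀ v ∈ G, ∀ w ∈ G, v j = w j) → h j = 0) ∧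
      ((Finset.univ.filter (fun i => h i ≠ 0)).card : ℝ) ≤ Real.logb 2 (n : ℝ) ∧
      ∃ v0, v0 ∈ G ∧
        (∀ w, E v0 + Zfield N h v0 ≤ E w + Zfield N h w) ∧
        (∀ w, (∀ x, E w + Zfield N h w ≤ E x + Zfield N h x) → w = v0) := by
  intro n
  induction n using Nat.strong_induction_on with
  | _ n IH =>
    intro E G hcard hne hG
    rcases Nat.lt_or_ge n 2 with hn | hn
    · -- base case : n = 1
      have hn1 : n = 1 := by
        rcases hne with ⟨v, hv⟩
        have : 1 ≤ G.card := Finset.one_le_card.mpr ⟨v, hv⟩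
        omega
      subst hn1
      obtain ⟨v0, hv0⟩ := Finset.card_eq_one.mp hcard
      refine ⟨0, fun i => Or.inr (Or.inl rfl), fun j _ => rfl, ?_, v0, ?_, ?_, ?_⟩
      · simp [Real.logb_one]
      · simp [hv0]
      · intro w
        have hv0G : v0 ∈ G := by simp [hv0]
        rw [hG] at hv0G
        simp only [Finset.mem_filter] at hv0G
        have hz : ∀ u, Zfield N 0 u = 0 := by intro u; simp [Zfield]
        simpa [hz] using hv0G.2 w
      · intro w hw
        have hz : ∀ u, Zfield N 0 u = 0 := by intro u; simp [Zfield]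
        have hwG : w ∈ G := by
          rw [hG]; simp only [Finset.mem_filter]
          exact ⟨Finset.mem_univ _, fun x => by simpa [hz] using hw x⟩
        rw [hv0] at hwG
        simpa using hwG
    · -- inductive step
      have h2 : 1 < G.card := by omega
      obtain ⟨u, hu, v, hv, huv⟩ := Finset.one_lt_card.mp h2
      obtain ⟨i, hi⟩ : ∃ i, u i ≠ v i := Function.ne_iff.mp huv
      set A := G.filter (fun x => x i = true) with hA
      set B := G.filter (fun x => x i = false) with hB
      have hAB : A.card + B.card = G.card := by
        have h1 := Finset.card_filter_add_card_filter_not (s := G)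
          (p := fun x => x i = true)
        have h2 : G.filter (fun x => ¬ x i = true) = B := by
          rw [hB]; apply Finset.filter_congr; intro x _; simp
        rw [h2] at h1
        rw [hA, hB]
        exact h1
      set b : Bool := if A.card ≤ B.card then true else false with hb
      set G' := G.filter (fun x => x i = b) with hG'
      have hG'half : 2 * G'.card ≤ G.card := by
        rw [hG', hb]
        split
        · rw [← hA]; omega
        · rw [← hB]; omega
      have hG'ne : G'.Nonempty := by
        rcases Bool.eq_false_or_eq_true (u i) with h | h <;>
        rcases Bool.eq_false_or_eq_true (v i) with h' | h'
        all_goals first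
        | (exact absurd (h.trans h'.symm) hi)
        | (rw [hG', hb]
           split
           · first
             | exact ⟨u, Finset.mem_filter.mpr ⟨hu, h⟩⟩
             | exact ⟨v, Finset.mem_filter.mpr ⟨hv, h'⟩⟩
           · first
             | exact ⟨u, Finset.mem_filter.mpr ⟨hu, h⟩⟩
             | exact ⟨v, Finset.mem_filter.mpr ⟨hv, h'⟩⟩)
      obtain ⟨v0', hv0'⟩ := hG'ne
      have hv0'G : v0' ∈ G := (Finset.mem_filter.mp hv0').1
      have hv0'i : v0' i = b := (Finset.mem_filter.mp hv0').2
      set m := E v0' with hm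
      have hmemG : ∀ w, w ∈ G ↔ ∀ x, E w ≤ E x := by
        intro w
        rw [hG]; simp
      have hmin : ∀ w, m ≤ E w := (hmemG v0').mp hv0'G
      have hEm : ∀ w ∈ G, E w = m :=
        fun w hw => le_antisymm ((hmemG w).mp hw v0') (hmin w)
      set E1 : (Fin N → Bool) → ℝ := fun x => E x + (if x i = b then (-1 : ℝ) else 1)
        with hE1
      have hE1low : ∀ w, m - 1 ≤ E1 w := by
        intro w
        rw [hE1]
        dsimp only
        split
        · have := hmin w; linarith
        · have := hmin w; linarith
      have hE1eq : ∀ w ∈ G', E1 w = m - 1 := by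
        intro w hw
        have h1 := hEm w (Finset.mem_filter.mp hw).1
        have h2 := (Finset.mem_filter.mp hw).2
        show E w + (if w i = b then (-1 : ℝ) else 1) = m - 1
        rw [h1, if_pos h2]
        ring
      have hE1strict : ∀ w, w ∉ G' → m - 1 < E1 w := by
        intro w hw
        by_cases hwG : w ∈ G
        · have hwi : ¬ (w i = b) := by
            intro h; exact hw (Finset.mem_filter.mpr ⟨hwG, h⟩)
          rw [hE1]
          have := hEm w hwG
          simp only [hwi, if_false]
          linarith
        · have : ∃ x, E x < E w := by
            by_contra hc
            push_neg at hc
            exact hwG ((hmemG w).mpr hc)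
          obtain ⟨x, hx⟩ := this
          have := hmin x
          rw [hE1]
          dsimp only
          split <;> linarith
      have hGS1 : G' = Finset.univ.filter (fun x => ∀ w, E1 x ≤ E1 w) := by
        ext w
        simp only [Finset.mem_filter, Finset.mem_univ, true_and]
        constructor
        · intro hw x
          rw [hE1eq w hw]
          exact hE1low x
        · intro hw
          by_contra hc
          have h1 := hE1strict w hc
          have h2 := hw v0'
          rw [hE1eq v0' hv0'] at h2
          linarith
      have hcard' : G'.card < n := by omega
      have hG'card1 : 1 ≤ G'.card := Finset.one_le_card.mpr ⟨v0', hv0'⟩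
      obtain ⟨h', hval', hagree', hsupp', w0, hw0G', hw0min, hw0uniq⟩ :=
        IH G'.card hcard' E1 G' rfl ⟨v0', hv0'⟩ hGS1
      have hh'i : h' i = 0 := by
        apply hagree' i
        intro x hx y hy
        rw [(Finset.mem_filter.mp hx).2, (Finset.mem_filter.mp hy).2]
      set c : ℤ := if b then -1 else 1 with hc
      set h : Fin N → ℤ := Function.update h' i c with hh
      -- energy decomposition
      have hZ : ∀ x, Zfield N h x = Zfield N h' x + (c : ℝ) * (if x i then 1 else -1) := by
        intro x
        have : Zfield N h x - Zfield N h' x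
            = ∑ j, ((h j : ℝ) - (h' j : ℝ)) * (if x j then 1 else -1) := by
          rw [Zfield, Zfield, ← Finset.sum_sub_distrib]
          congr 1
          ext j
          ring
        rw [Finset.sum_eq_single_of_mem i (Finset.mem_univ i)] at this
        · have hhi : h i = c := by rw [hh]; simp
          rw [hhi, hh'i] at this
          push_cast at this
          linarith
        · intro j _ hj
          have : h j = h' j := by rw [hh]; simp [Function.update_of_ne hj]
          rw [this]
          ring
      have hEeq : ∀ x, E x + Zfield N h x = E1 x + Zfield N h' x := by
        intro x
        rw [hZ, hE1]
        have : (c : ℝ) * (if x i then 1 else -1) = (if x i = b then (-1 : ℝ) else 1) := by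
          rw [hc]
          cases b <;> cases hx : x i <;> simp
        dsimp only
        rw [this]
        ring
      refine ⟨h, ?_, ?_, ?_, w0, ?_, ?_, ?_⟩
      · intro j
        by_cases hj : j = i
        · subst hj
          rw [hh]
          simp only [Function.update_self]
          rw [hc]; cases b <;> simp
        · rw [hh, Function.update_of_ne hj]
          exact hval' j
      · intro j hj
        have hji : j ≠ i := by
          intro h
          subst h
          exact hi (hj u hu v hv)
        rw [hh, Function.update_of_ne hji]
        apply hagree' j
        intro x hx y hy
        exact hj x (Finset.mem_filter.mp hx).1 y (Finset.mem_filter.mp hy).1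
      · -- support bound
        have hsub : Finset.univ.filter (fun j => h j ≠ 0)
            ⊆ insert i (Finset.univ.filter (fun j => h' j ≠ 0)) := by
          intro j hj
          simp only [Finset.mem_filter, Finset.mem_univ, true_and] at hj
          by_cases hji : j = i
          · subst hji; exact Finset.mem_insert_self _ _
          · rw [hh, Function.update_of_ne hji] at hj
            exact Finset.mem_insert_of_mem (by simp [hj])
        have hcardsub := Finset.card_le_card hsub
        have hinsert := Finset.card_insert_le i (Finset.univ.filter (fun j => h' j ≠ 0))
        have hle : ((Finset.univ.filter (fun j => h j ≠ 0)).card : ℝ)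
            ≤ ((Finset.univ.filter (fun j => h' j ≠ 0)).card : ℝ) + 1 := by
          push_cast
          have := hcardsub.trans hinsert
          exact_mod_cast this
        have hlogmono : Real.logb 2 (G'.card : ℝ) ≤ Real.logb 2 ((n : ℝ) / 2) := by
          apply Real.logb_le_logb_of_le (by norm_num) (by exact_mod_cast hG'card1)
          have : (2 : ℝ) * (G'.card : ℝ) ≤ (n : ℝ) := by
            rw [← hcard]
            exact_mod_cast hG'half
          linarith
        have hlogdiv : Real.logb 2 ((n : ℝ) / 2) = Real.logb 2 (n : ℝ) - 1 := by
          rw [Real.logb_div (by positivity) (by norm_num), Real.logb_self_eq_one] <;> norm_num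
        calc ((Finset.univ.filter (fun j => h j ≠ 0)).card : ℝ)
            ≤ ((Finset.univ.filter (fun j => h' j ≠ 0)).card : ℝ) + 1 := hle
          _ ≤ Real.logb 2 (G'.card : ℝ) + 1 := by linarith [hsupp']
          _ ≤ Real.logb 2 (n : ℝ) := by rw [hlogdiv] at hlogmono; linarith
      · exact (Finset.mem_filter.mp hw0G').1
      · intro w
        rw [hEeq, hEeq]
        exact hw0min w
      · intro w hw
        apply hw0uniq
        intro x
        rw [← hEeq, ← hEeq]
        exact hw x

/-- if a diagonal Hamiltonian `E` on `{-1,+1}^N` (spin configurations encoded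
as `Fin N → Bool`, with `Z_i v = ±1`) has `n_gs` ground states, then there is a field vector
`h ∈ {-1,0,+1}^N` with at most `log₂ n_gs` nonzero entries such that
`E + ∑_i h_i Z_i` has a unique ground state, which is also a ground state of `E`. -/
theorem reduce_to_unique_ground_state (N : ℕ) (E : (Fin N → Bool) → ℝ)
    (G : Finset (Fin N → Bool))
    (hG : G = Finset.univ.filter (fun v => ∀ w, E v ≤ E w)) :
    ∃ h : Fin N → ℤ, (∀ i, h i = -1 ∨ h i = 0 ∨ h i = 1) ∧
      ((Finset.univ.filter (fun i => h i ≠ 0)).card : ℝ) ≤ Real.logb 2 (G.card : ℝ) ∧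
      ∃ v0 : Fin N → Bool, v0 ∈ G ∧
        (∀ w, E v0 + ∑ i, (h i : ℝ) * (if v0 i then 1 else -1)
              ≤ E w + ∑ i, (h i : ℝ) * (if w i then 1 else -1)) ∧
        (∀ w, (∀ x, E w + ∑ i, (h i : ℝ) * (if w i then 1 else -1)
              ≤ E x + ∑ i, (h i : ℝ) * (if x i then 1 else -1)) → w = v0) := by
  have hne : G.Nonempty := by
    obtain ⟨v, -, hv⟩ := Finset.exists_min_image Finset.univ E ⟨default, Finset.mem_univ _⟩
    exact ⟨v, by rw [hG]; exact Finset.mem_filter.mpr ⟨Finset.mem_univ _, fun w => hv w (Finset.mem_univ _)⟩⟩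
  obtain ⟨h, hval, hagree, hsupp, v0, hv0, hmin, huniq⟩ :=
    key N G.card E G rfl hne hG
  exact ⟨h, hval, hsupp, v0, hv0, hmin, huniq⟩
end

section
/- Let H_0 be Hermitian with unique ground state |0⟩ of energy E_0, V Hermitian, Q = 1 - |0⟩⟨0|, and suppose the lowest eigenvalue E^Q of QH_1Q restricted to the range of Q satisfies E^Q ≥ E_0 + 1/2, and the ground energy E_{0,1} of H_1 = H_0 + V satisfies E_{0,1} ≤ E_0. Then ‖G_1(E_{0,1})‖ ≤ 2 where G_1(ω) = (Q(ω - H_1)Q)^{-1} on the range of Q, and the ground energy satisfies E_{0,1} ≥ E_0 + ⟨0|V|0⟩ - 2⟨0|VQV|0⟩, and the unnormalized ground state φ with ⟨0|φ⟩ = 1 satisfies |φ|² ≤ 1 + 4⟨0|VQV|0⟩. -/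
open scoped RealInnerProductSpace

/-- with `Q = 1 - |0⟩⟨0|`, if the lowest eigenvalue of `QH₁Q` on the range
of `Q` is at least `E₀ + 1/2` (expressed via the Rayleigh quotient) and the ground energy
`E_{0,1}` of `H₁ = H₀ + V` satisfies `E_{0,1} ≤ E₀`, then the pseudo-inverse
`G₁ = (Q(E_{0,1} - H₁)Q)⁻¹` has norm at most `2`,
`E_{0,1} ≥ E₀ + ⟨0|V|0⟩ - 2⟨0|VQV|0⟩`, and the unnormalized ground state
`φ = |0⟩ + G₁V|0⟩` (with `⟨0|φ⟩ = 1`) satisfies `|φ|² ≤ 1 + 4⟨0|VQV|0⟩`. -/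
theorem bw_norm_energy_bounds (n : ℕ)
    (H0 H1 V G1 : EuclideanSpace ℝ (Fin n) →L[ℝ] EuclideanSpace ℝ (Fin n))
    (v0 : EuclideanSpace ℝ (Fin n)) (hv0 : ‖v0‖ = 1)
    (E0 E01 : ℝ)
    (Qf : EuclideanSpace ℝ (Fin n) → EuclideanSpace ℝ (Fin n))
    (hQf : ∀ x, Qf x = x - ⟪v0, x⟫ • v0)
    (hH1 : H1 = H0 + V)
    (hsymH1 : ∀ x y, ⟪H1 x, y⟫ = ⟪x, H1 y⟫)
    (hsymV : ∀ x y, ⟪V x, y⟫ = ⟪x, V y⟫)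
    (hground : H0 v0 = E0 • v0)
    (hEQ : ∀ x, ⟪v0, x⟫ = 0 → (E0 + 1 / 2) * ‖x‖ ^ 2 ≤ ⟪x, H1 x⟫)
    (hE01 : E01 ≤ E0)
    (hG1v0 : G1 v0 = 0)
    (hQG1 : ∀ x, ⟪v0, G1 x⟫ = 0)
    (hinv : ∀ x, Qf (E01 • G1 x - H1 (G1 x)) = Qf x)
    (hE01eq : E01 = E0 + ⟪v0, V v0⟫ + ⟪v0, V (G1 (V v0))⟫) :
    ‖G1‖ ≤ 2 ∧
    E0 + ⟪v0, V v0⟫ - 2 * ⟪V v0, Qf (V v0)⟫ ≤ E01 ∧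
    ‖v0 + G1 (V v0)‖ ^ 2 ≤ 1 + 4 * ⟪V v0, Qf (V v0)⟫ := by

  -- y ⊥ v0 for y = G1 x
  have hyv0 : ∀ x : EuclideanSpace ℝ (Fin n), ⟪G1 x, v0⟫ = 0 := fun x => by
    rw [real_inner_comm]; exact hQG1 x
  -- key identity: ⟪G1 x, x⟫ = E01 ‖G1 x‖² - ⟪G1 x, H1 (G1 x)⟫
  have key : ∀ x : EuclideanSpace ℝ (Fin n),
      ⟪G1 x, x⟫ = E01 * ‖G1 x‖ ^ 2 - ⟪G1 x, H1 (G1 x)⟫ := by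
    intro x
    have h := hinv x
    rw [hQf, hQf] at h
    have h' := congrArg (fun z => ⟪G1 x, z⟫) h
    simp only [inner_sub_right, real_inner_smul_right, hyv0 x,
      mul_zero, sub_zero] at h'
    rw [real_inner_self_eq_norm_sq] at h'
    linarith
  -- ⟪G1 x, x⟫ ≤ -(1/2) ‖G1 x‖²
  have keyle : ∀ x : EuclideanSpace ℝ (Fin n),
      ⟪G1 x, x⟫ ≤ -(1/2) * ‖G1 x‖ ^ 2 := by
    intro x
    have h1 := hEQ (G1 x) (hQG1 x)
    have h2 := key x
    nlinarith [sq_nonneg ‖G1 x‖]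
  -- ⟪G1 x, x⟫ = ⟪G1 x, Qf x⟫
  have hQs : ∀ x : EuclideanSpace ℝ (Fin n), ⟪G1 x, Qf x⟫ = ⟪G1 x, x⟫ := by
    intro x
    rw [hQf, inner_sub_right, real_inner_smul_right, hyv0 x, mul_zero, sub_zero]
  -- ‖Qf x‖² = ⟪x, Qf x⟫ = ‖x‖² - ⟪v0,x⟫²
  have hQip : ∀ x : EuclideanSpace ℝ (Fin n),
      ⟪x, Qf x⟫ = ‖x‖ ^ 2 - ⟪v0, x⟫ ^ 2 := by
    intro x
    rw [hQf, inner_sub_right, real_inner_smul_right, real_inner_comm x v0]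
    rw [← real_inner_self_eq_norm_sq]; ring
  have hQsq : ∀ x : EuclideanSpace ℝ (Fin n),
      ‖Qf x‖ ^ 2 = ‖x‖ ^ 2 - ⟪v0, x⟫ ^ 2 := by
    intro x
    rw [hQf, norm_sub_sq_real, real_inner_smul_right, real_inner_comm x v0,
      norm_smul, hv0]
    simp [abs_sq]
    ring
  -- ‖G1 x‖ ≤ 2 ‖Qf x‖
  have hnormyQ : ∀ x : EuclideanSpace ℝ (Fin n), ‖G1 x‖ ≤ 2 * ‖Qf x‖ := by
    intro x
    have h1 : (1/2 : ℝ) * ‖G1 x‖ ^ 2 ≤ -⟪G1 x, Qf x⟫ := by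
      have := keyle x; rw [hQs x]; linarith
    have h2 : -⟪G1 x, Qf x⟫ ≤ ‖G1 x‖ * ‖Qf x‖ := by
      have := neg_le_of_abs_le (abs_real_inner_le_norm (G1 x) (Qf x))
      linarith
    rcases eq_or_lt_of_le (norm_nonneg (G1 x)) with h0 | h0
    · rw [← h0]; positivity
    · nlinarith
  -- the bound -⟪G1 x, x⟫ ≤ 2 ⟪x, Qf x⟫ and ‖G1 x‖² ≤ 4 ⟪x, Qf x⟫
  have hbound : ∀ x : EuclideanSpace ℝ (Fin n),
      -⟪G1 x, x⟫ ≤ 2 * ⟪x, Qf x⟫ ∧ ‖G1 x‖ ^ 2 ≤ 4 * ⟪x, Qf x⟫ := by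
    intro x
    have h1 : (1/2 : ℝ) * ‖G1 x‖ ^ 2 ≤ -⟪G1 x, Qf x⟫ := by
      have := keyle x; rw [hQs x]; linarith
    have h2 : -⟪G1 x, Qf x⟫ ≤ ‖G1 x‖ * ‖Qf x‖ := by
      have := neg_le_of_abs_le (abs_real_inner_le_norm (G1 x) (Qf x))
      linarith
    have h3 := hnormyQ x
    have h4 : ⟪x, Qf x⟫ = ‖Qf x‖ ^ 2 := by rw [hQip x, hQsq x]
    have h5 : -⟪G1 x, x⟫ ≤ 2 * ⟪x, Qf x⟫ := by
      rw [← hQs x, h4]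
      nlinarith [norm_nonneg (G1 x), norm_nonneg (Qf x)]
    refine ⟨h5, ?_⟩
    have := keyle x
    nlinarith
  refine ⟨?_, ?_, ?_⟩
  · apply ContinuousLinearMap.opNorm_le_bound _ (by norm_num)
    intro x
    have h1 := hnormyQ x
    have h2 : ‖Qf x‖ ≤ ‖x‖ := by
      have := hQsq x
      nlinarith [norm_nonneg (Qf x), norm_nonneg x, sq_nonneg (⟪v0, x⟫ : ℝ)]
    linarith
  · have h := (hbound (V v0)).1
    have hx : ⟪v0, V (G1 (V v0))⟫ = ⟪G1 (V v0), V v0⟫ := by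
      rw [← hsymV v0 (G1 (V v0)), real_inner_comm]
    rw [hE01eq, hx]
    linarith
  · have h := (hbound (V v0)).2
    rw [norm_add_sq_real, hQG1 (V v0), hv0]
    simp only [one_pow, mul_zero]
    linarith
end
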